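/- arXiv:0909.1824 — 10 statements merged into one kernel-verified Lean document; each statement's English description precedes it below -/
import Mathlib

section
/- For 0 ≤ r < 1, the double integral (1/(2π)²)∫₀^{2π}∫₀^{2π} 1/|2 - re^{iθ} - re^{iφ}|² dφ dθ equals 1/(4√(1-r²)). In particular, this quantity tends to infinity as r → 1⁻, so 1/(2-z-w) is not in L²(𝕋²). -/
/-!
On the unit circle `‖a - b z‖ = ‖conj a * z - conj b‖`, so the Poisson formula for the constant
function `1` gives `∫ dφ / ‖a - b e^{iφ}‖² = 2π / (‖a‖² - ‖b‖²)` whenever `‖b‖ < ‖a‖`.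
For fixed `θ`, taking `a = 2 - r e^{iθ}` and `b = r` turns the inner integral into
`(π / 2) / (1 - r cos θ)`. Writing `r = 2ρ / (1 + ρ²)` makes `1 - r cos θ` proportional to
`‖1 - ρ e^{iθ}‖²`, so the outer integral is again a Poisson integral and equals
`2π / √(1 - r²)`.
-/

open Real Filter

open Complex ComplexConjugate Topology

theorem integral_inv_norm_exp_mul_I_sub_sq {w : ℂ} (hw : ‖w‖ < 1) :
    ∫ φ in (0:ℝ)..2 * π, 1 / ‖exp (φ * I) - w‖ ^ 2 = 2 * π / (1 - ‖w‖ ^ 2) := by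
  have hpoisson := (diffContOnCl_const (c := (1 : ℂ))).circleAverage_poissonKernel_smul
    (mem_ball_zero_iff.mpr hw)
  simp only [Real.circleAverage_def, poissonKernel_def, circleMap_zero, Pi.smul_apply',
    sub_zero, ofReal_one, one_mul, norm_exp_ofReal_mul_I, one_pow, real_smul, mul_one,
    intervalIntegral.integral_ofReal, ← ofReal_mul, ofReal_eq_one] at hpoisson
  simp_rw [div_eq_mul_one_div (1 - ‖w‖ ^ 2), intervalIntegral.integral_const_mul] at hpoisson
  have hw' : 0 < 1 - ‖w‖ ^ 2 := by nlinarith [norm_nonneg w]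
  rw [inv_mul_eq_one₀ (by positivity)] at hpoisson
  rw [eq_div_iff hw'.ne', mul_comm]
  exact hpoisson.symm

theorem norm_sub_mul_eq_norm_conj_mul_sub (a b : ℂ) {z : ℂ} (hz : ‖z‖ = 1) :
    ‖a - b * z‖ = ‖conj a * z - conj b‖ := by
  have hzz : conj z * z = 1 := by rw [conj_mul', hz]; simp
  calc ‖a - b * z‖ = ‖conj (a - b * z) * z‖ := by rw [norm_mul, hz, mul_one, norm_conj]
    _ = ‖conj a * z - conj b‖ := by rw [map_sub, map_mul, sub_mul, mul_assoc, hzz, mul_one]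

theorem integral_inv_norm_sub_mul_exp_mul_I_sq {a b : ℂ} (hab : ‖b‖ < ‖a‖) :
    ∫ φ in (0:ℝ)..2 * π, 1 / ‖a - b * exp (φ * I)‖ ^ 2 = 2 * π / (‖a‖ ^ 2 - ‖b‖ ^ 2) := by
  have ha : 0 < ‖a‖ := (norm_nonneg b).trans_lt hab
  have hw : ‖conj b / conj a‖ < 1 := by
    rwa [norm_div, norm_conj, norm_conj, div_lt_one ha]
  have hfactor (φ : ℝ) : 1 / ‖a - b * exp (φ * I)‖ ^ 2
      = 1 / ‖a‖ ^ 2 * (1 / ‖exp (φ * I) - conj b / conj a‖ ^ 2) := by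
    rw [norm_sub_mul_eq_norm_conj_mul_sub a b (norm_exp_ofReal_mul_I φ)]
    have hca : conj a ≠ 0 := by simpa using ha.ne'
    rw [← norm_conj a, one_div_mul_one_div, ← mul_pow, ← norm_mul, mul_sub,
      mul_div_cancel₀ _ hca]
  simp_rw [hfactor, intervalIntegral.integral_const_mul, integral_inv_norm_exp_mul_I_sub_sq hw,
    norm_div, norm_conj]
  field_simp

theorem norm_ofReal_sub_ofReal_mul_exp_mul_I_sq (a b θ : ℝ) :
    ‖(a : ℂ) - b * exp (θ * I)‖ ^ 2 = a ^ 2 - 2 * a * b * Real.cos θ + b ^ 2 := by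
  rw [Complex.sq_norm, normSq_apply, exp_mul_I, ← ofReal_cos, ← ofReal_sin]
  simp only [sub_re, sub_im, mul_re, mul_im, add_re, add_im, ofReal_re, ofReal_im, I_re, I_im]
  linear_combination b ^ 2 * Real.sin_sq_add_cos_sq θ

theorem integral_inv_one_sub_two_mul_cos_add_sq {ρ : ℝ} (hρ : |ρ| < 1) :
    ∫ θ in (0:ℝ)..2 * π, 1 / (1 - 2 * ρ * Real.cos θ + ρ ^ 2) = 2 * π / (1 - ρ ^ 2) := by
  have h := integral_inv_norm_sub_mul_exp_mul_I_sq (a := 1) (b := ρ) (by simpa using hρ)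
  simpa [← ofReal_one, norm_ofReal_sub_ofReal_mul_exp_mul_I_sq, sq_abs] using h

theorem integral_inv_one_sub_mul_cos {r : ℝ} (hr : |r| < 1) :
    ∫ θ in (0:ℝ)..2 * π, 1 / (1 - r * Real.cos θ) = 2 * π / √(1 - r ^ 2) := by
  have hr2 : 0 < 1 - r ^ 2 := by nlinarith [sq_abs r, abs_nonneg r]
  set s := √(1 - r ^ 2)
  have hs0 : 0 < s := Real.sqrt_pos.mpr hr2
  have hss : s ^ 2 = 1 - r ^ 2 := Real.sq_sqrt hr2.le
  set ρ := r / (1 + s) with hρ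
  have hρ1 : |ρ| < 1 := by
    rw [hρ, abs_div, abs_of_pos (show 0 < 1 + s by linarith), div_lt_one (by linarith)]
    linarith
  have hr : r = 2 * ρ / (1 + ρ ^ 2) := by
    rw [hρ]; field_simp; linear_combination r * hss
  have hfactor (θ : ℝ) : 1 / (1 - r * Real.cos θ)
      = (1 + ρ ^ 2) * (1 / (1 - 2 * ρ * Real.cos θ + ρ ^ 2)) := by
    rw [hr]; field_simp; ring
  have hρs : (1 + ρ ^ 2) * s = 1 - ρ ^ 2 := by
    rw [hρ]; field_simp; linear_combination (s + 1) * hss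
  simp_rw [hfactor, intervalIntegral.integral_const_mul,
    integral_inv_one_sub_two_mul_cos_add_sq hρ1, ← hρs]
  field_simp

theorem integral_inv_norm_two_sub_sub_sq {r : ℝ} (hr : |r| < 1) (θ : ℝ) :
    ∫ φ in (0:ℝ)..2 * π, 1 / ‖2 - r * exp (θ * I) - r * exp (φ * I)‖ ^ 2
      = π / 2 * (1 / (1 - r * Real.cos θ)) := by
  have hnorm : ‖(2 : ℂ) - r * exp (θ * I)‖ ^ 2 = 4 - 4 * r * Real.cos θ + r ^ 2 := by
    rw [← ofReal_ofNat, norm_ofReal_sub_ofReal_mul_exp_mul_I_sq]; ring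
  have hlt : ‖(r : ℂ)‖ < ‖(2 : ℂ) - r * exp (θ * I)‖ := by
    have := norm_sub_norm_le (2 : ℂ) (r * exp (θ * I))
    simp only [norm_mul, norm_real, Real.norm_eq_abs, norm_exp_ofReal_mul_I, mul_one,
      Complex.norm_ofNat] at this ⊢
    linarith
  have hcos : r * Real.cos θ < 1 :=
    calc r * Real.cos θ ≤ |r| * |Real.cos θ| := (le_abs_self _).trans_eq (abs_mul _ _)
      _ ≤ |r| := mul_le_of_le_one_right (abs_nonneg r) (abs_cos_le_one θ)
      _ < 1 := hr
  rw [integral_inv_norm_sub_mul_exp_mul_I_sq hlt, hnorm, norm_real, Real.norm_eq_abs, sq_abs]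
  field_simp [(sub_pos.mpr hcos).ne']
  ring

noncomputable def bernsteinSzegoMass (r : ℝ) : ℝ :=
  (1 / (2 * π) ^ 2) * ∫ θ in (0:ℝ)..(2 * π), ∫ φ in (0:ℝ)..(2 * π),
    1 / ‖2 - r * exp (θ * I) - r * exp (φ * I)‖ ^ 2

theorem bernsteinSzegoMass_eq {r : ℝ} (hr : |r| < 1) :
    bernsteinSzegoMass r = 1 / (4 * √(1 - r ^ 2)) := by
  simp_rw [bernsteinSzegoMass, integral_inv_norm_two_sub_sub_sq hr,
    intervalIntegral.integral_const_mul, integral_inv_one_sub_mul_cos hr]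
  field_simp
  ring

theorem tendsto_bernsteinSzegoMass : Tendsto bernsteinSzegoMass (𝓝[<] 1) atTop := by
  have hsqrt : Tendsto (fun r : ℝ => 4 * √(1 - r ^ 2)) (𝓝[<] 1) (𝓝[>] 0) := by
    refine tendsto_nhdsWithin_iff.mpr ⟨?_, ?_⟩
    · exact (Continuous.tendsto' (by fun_prop) 1 0 (by simp)).mono_left nhdsWithin_le_nhds
    · filter_upwards [Ioo_mem_nhdsLT zero_lt_one] with r hr
      have : 0 < 1 - r ^ 2 := by nlinarith [hr.1, hr.2]
      exact mul_pos four_pos (Real.sqrt_pos.mpr this)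
  refine (tendsto_inv_nhdsGT_zero.comp hsqrt).congr' ?_
  filter_upwards [Ioo_mem_nhdsLT (neg_lt_self zero_lt_one)] with r hr
  rw [Function.comp_apply, bernsteinSzegoMass_eq (abs_lt.mpr hr), one_div]

theorem bernstein_szego_measure_infinite_mass :
    (∀ r : ℝ, 0 ≤ r → r < 1 →
      (1 / (2 * π) ^ 2) * ∫ θ in (0:ℝ)..(2 * π), ∫ φ in (0:ℝ)..(2 * π),
          1 / ‖2 - r * Complex.exp (θ * Complex.I)
              - r * Complex.exp (φ * Complex.I)‖ ^ 2 =
        1 / (4 * Real.sqrt (1 - r ^ 2))) ∧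
    Tendsto (fun r : ℝ =>
      (1 / (2 * π) ^ 2) * ∫ θ in (0:ℝ)..(2 * π), ∫ φ in (0:ℝ)..(2 * π),
          1 / ‖2 - r * Complex.exp (θ * Complex.I)
              - r * Complex.exp (φ * Complex.I)‖ ^ 2)
      (nhdsWithin 1 (Set.Ico 0 1)) atTop :=
  ⟨fun r hr₀ hr₁ => bernsteinSzegoMass_eq (abs_lt.mpr ⟨by linarith, hr₁⟩),
    tendsto_bernsteinSzegoMass.mono_left (nhdsWithin_mono _ Set.Ico_subset_Iio_self)⟩
end

section
/- For 0 ≤ r < 1, the double integral (1/(2π)²)∫₀^{2π}∫₀^{2π} |re^{iθ}-1|²/|2 - re^{iθ} - re^{iφ}|² dφ dθ equals (2-√(1-r²))/4, which tends to 1/2 as r → 1⁻. Consequently (z-1)/(2-z-w) belongs to the Hardy space H²(𝕋²). -/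
/-!
For fixed `z`, the inner average over `w` is a multiple of the mean of `‖w - (2 - z)‖⁻²` over the
circle `‖w‖ = r`, outside of which `2 - z` lies; reflecting `2 - z` in that circle turns it into a
Poisson integral, with value `(‖2 - z‖² - r²)⁻¹`. On `‖z‖ = r` the resulting integrand is
`1/2 - (1 - r²) / (4 (1 - re z))`, and the mean of `(a - re z)⁻¹` is once more a Poisson integral,
equal to `(a² - r²)^(-1/2)`.
-/

open Real Filter

section

open Complex Metric ComplexConjugate

theorem Complex.sq_norm_sub_ofReal (z : ℂ) (x : ℝ) :
    ‖z - x‖ ^ 2 = ‖z‖ ^ 2 - 2 * x * z.re + x ^ 2 := by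
  simp only [Complex.sq_norm, Complex.normSq_apply, sub_re, sub_im, ofReal_re, ofReal_im]
  ring

theorem circleAverage_inv_sq_norm_sub_of_mem_ball {c w : ℂ} {R : ℝ} (hw : w ∈ ball c R) :
    circleAverage (fun z ↦ (‖z - w‖ ^ 2)⁻¹) c R = (R ^ 2 - ‖w - c‖ ^ 2)⁻¹ := by
  have hwR : ‖w - c‖ < R := mem_ball_iff_norm.1 hw
  have hkernel : Set.EqOn (poissonKernel c w • fun _ ↦ (1 : ℝ))
      (fun z ↦ (R ^ 2 - ‖w - c‖ ^ 2) • (‖z - w‖ ^ 2)⁻¹) (sphere c |R|) := by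
    intro z hz
    rw [abs_of_pos ((norm_nonneg _).trans_lt hwR), mem_sphere_iff_norm] at hz
    simp [poissonKernel_def, hz, div_eq_mul_inv]
  have hpoisson :=
    (InnerProductSpace.harmonicContOnCl_const (c := (1 : ℝ))).circleAverage_poissonKernel_smul
      hw
  rw [circleAverage_congr_sphere hkernel, circleAverage_fun_smul, smul_eq_mul] at hpoisson
  exact eq_inv_of_mul_eq_one_right hpoisson

theorem norm_mul_norm_sub_sq_div_conj {z a : ℂ} {R : ℝ} (hz : ‖z‖ = R) (ha : a ≠ 0) :
    ‖a‖ * ‖z - R ^ 2 / conj a‖ = R * ‖z - a‖ := by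
  have hconj : conj a ≠ 0 := by simpa using ha
  have hR : (R : ℂ) ^ 2 = z * conj z := by
    rw [mul_conj, normSq_eq_norm_sq, hz]; push_cast; rfl
  calc ‖a‖ * ‖z - R ^ 2 / conj a‖ = ‖conj a * z - R ^ 2‖ := by
        rw [← norm_conj a, ← norm_mul, mul_sub, mul_div_cancel₀ _ hconj]
    _ = ‖z‖ * ‖conj (a - z)‖ := by rw [← norm_mul, hR, map_sub]; ring_nf
    _ = R * ‖z - a‖ := by rw [hz, norm_conj, norm_sub_rev]

theorem circleAverage_inv_sq_norm_sub_of_lt_norm {a : ℂ} {R : ℝ} (hR : 0 ≤ R) (ha : R < ‖a‖) :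
    circleAverage (fun z ↦ (‖z - a‖ ^ 2)⁻¹) 0 R = (‖a‖ ^ 2 - R ^ 2)⁻¹ := by
  rcases hR.eq_or_lt with rfl | hR
  · simp
  have ha0 : 0 < ‖a‖ := hR.trans ha
  set w := (R : ℂ) ^ 2 / conj a
  have hw : ‖w‖ = R ^ 2 / ‖a‖ := by simp [w, abs_of_pos hR]
  have hw_mem : w ∈ ball 0 R := by
    rw [mem_ball_zero_iff, hw, div_lt_iff₀ ha0]
    nlinarith
  have hreflect : Set.EqOn (fun z ↦ (‖z - a‖ ^ 2)⁻¹)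
      (fun z ↦ (R ^ 2 / ‖a‖ ^ 2) • (‖z - w‖ ^ 2)⁻¹) (sphere 0 |R|) := by
    intro z hz
    rw [abs_of_pos hR, mem_sphere_zero_iff_norm] at hz
    have hzw : ‖z - w‖ = R * ‖z - a‖ / ‖a‖ := by
      rw [eq_div_iff ha0.ne', mul_comm, norm_mul_norm_sub_sq_div_conj hz (norm_pos_iff.1 ha0)]
    simp only [smul_eq_mul, hzw]
    field_simp
  rw [circleAverage_congr_sphere hreflect, circleAverage_fun_smul,
    circleAverage_inv_sq_norm_sub_of_mem_ball hw_mem, sub_zero, hw, smul_eq_mul]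
  field_simp

theorem circleAverage_inv_sub_re {a r : ℝ} (hr : 0 ≤ r) (hra : r < a) :
    circleAverage (fun z ↦ (a - z.re)⁻¹) 0 r = (√(a ^ 2 - r ^ 2))⁻¹ := by
  rcases hr.eq_or_lt with rfl | hr
  · simp [sqrt_sq hra.le]
  set t := √(a ^ 2 - r ^ 2)
  have ht_sq : t ^ 2 = a ^ 2 - r ^ 2 := sq_sqrt (by nlinarith)
  have ht_pos : 0 < t := sqrt_pos.2 (by nlinarith)
  -- With `r (1 + s²) = 2 a s`, `(a - re (r z))⁻¹` is a multiple of the Poisson kernel at `s`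
  -- on the unit circle.
  obtain ⟨s, hrs⟩ : ∃ s, r * s = a - t := ⟨(a - t) / r, by field_simp⟩
  have hs : r * (1 + s ^ 2) = 2 * a * s := by nlinarith
  have hs_pos : 0 < s := pos_of_mul_pos_right (hrs ▸ by nlinarith) hr.le
  have hs_lt : s < 1 := by nlinarith
  have hs_mem : (s : ℂ) ∈ ball 0 1 := by simpa [abs_of_pos hs_pos] using hs_lt
  have hkernel : Set.EqOn (fun z : ℂ ↦ (a - (r * z + 0).re)⁻¹)
      (fun z ↦ (2 * s / r) • (‖z - s‖ ^ 2)⁻¹) (sphere 0 |1|) := by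
    intro z hz
    rw [abs_one, mem_sphere_zero_iff_norm] at hz
    have hre := abs_le.1 (hz ▸ abs_re_le_norm z)
    have hden : 0 < 1 - 2 * s * z.re + s ^ 2 := by nlinarith
    simp only [add_zero, re_ofReal_mul, smul_eq_mul, sq_norm_sub_ofReal, hz, one_pow]
    rw [inv_eq_iff_eq_inv]
    field_simp
    linear_combination -hs
  rw [circleAverage_eq_circleAverage_zero_one, circleAverage_congr_sphere hkernel,
    circleAverage_fun_smul, circleAverage_inv_sq_norm_sub_of_mem_ball hs_mem]
  have hs_sq : 0 < 1 - s ^ 2 := by nlinarith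
  simp only [sub_zero, norm_real, norm_of_nonneg hs_pos.le, smul_eq_mul, one_pow]
  field_simp
  linear_combination 2 * s * hrs - hs

theorem circleAverage_circleAverage_eq_integral_integral {E : Type*} [NormedAddCommGroup E]
    [NormedSpace ℝ E] (F : ℂ → ℂ → E) (r : ℝ) :
    circleAverage (fun z ↦ circleAverage (F z) 0 r) 0 r =
      (1 / (2 * π) ^ 2) • ∫ θ in (0:ℝ)..(2 * π), ∫ φ in (0:ℝ)..(2 * π),
        F (r * exp (θ * I)) (r * exp (φ * I)) := by
  simp only [circleAverage_def, circleMap, zero_add, intervalIntegral.integral_smul, smul_smul]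
  congr 1
  ring

theorem circleAverage_circleAverage_sq_norm_sub_one_div_sq_norm_two_sub_sub {r : ℝ}
    (hr : 0 ≤ r) (hr1 : r < 1) :
    circleAverage (fun z ↦ circleAverage (fun w ↦ ‖z - 1‖ ^ 2 / ‖2 - z - w‖ ^ 2) 0 r) 0 r =
      (2 - √(1 - r ^ 2)) / 4 := by
  have hinner : Set.EqOn (fun z ↦ circleAverage (fun w ↦ ‖z - 1‖ ^ 2 / ‖2 - z - w‖ ^ 2) 0 r)
      (fun z ↦ 1 / 2 - ((1 - r ^ 2) / 4) • (1 - z.re)⁻¹) (sphere 0 |r|) := by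
    intro z hz
    rw [abs_of_nonneg hr, mem_sphere_zero_iff_norm] at hz
    have hre : z.re ≤ r := hz ▸ re_le_norm z
    have hsq : ‖2 - z‖ ^ 2 = r ^ 2 + 4 * (1 - z.re) := by
      rw [norm_sub_rev, ← ofReal_ofNat, sq_norm_sub_ofReal, hz]; ring
    have hlt : r < ‖2 - z‖ := by nlinarith [norm_nonneg (2 - z)]
    have hre1 : 0 < 1 - z.re := by linarith
    calc circleAverage (fun w ↦ ‖z - 1‖ ^ 2 / ‖2 - z - w‖ ^ 2) 0 r
        = circleAverage (fun w ↦ ‖z - 1‖ ^ 2 • (‖w - (2 - z)‖ ^ 2)⁻¹) 0 r := by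
          simp only [norm_sub_rev (2 - z), smul_eq_mul, div_eq_mul_inv]
      _ = ‖z - 1‖ ^ 2 * (‖2 - z‖ ^ 2 - r ^ 2)⁻¹ := by
          rw [circleAverage_fun_smul, circleAverage_inv_sq_norm_sub_of_lt_norm hr hlt,
            smul_eq_mul]
      _ = 1 / 2 - ((1 - r ^ 2) / 4) • (1 - z.re)⁻¹ := by
          rw [hsq, ← ofReal_one, sq_norm_sub_ofReal, hz, smul_eq_mul]
          field_simp
          ring
  have hint : CircleIntegrable (fun z : ℂ ↦ ((1 - r ^ 2) / 4) • (1 - z.re)⁻¹) 0 r := by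
    have hne : ∀ z ∈ sphere (0 : ℂ) r, 1 - z.re ≠ 0 := fun z hz ↦ by
      rw [mem_sphere_zero_iff_norm] at hz
      linarith [hz ▸ re_le_norm z]
    exact ContinuousOn.circleIntegrable hr (by fun_prop (disch := exact hne))
  rw [circleAverage_congr_sphere hinner,
    circleAverage_fun_sub (circleIntegrable_const _ _ _) hint, circleAverage_const,
    circleAverage_fun_smul, circleAverage_inv_sub_re hr hr1, one_pow, smul_eq_mul]
  have ht : 0 < √(1 - r ^ 2) := sqrt_pos.2 (by nlinarith)
  field_simp
  linear_combination 2 * sq_sqrt (by nlinarith : 0 ≤ 1 - r ^ 2)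

end

theorem radial_means_z_sub_one_div_two_sub_z_sub_w :
    (∀ r : ℝ, 0 ≤ r → r < 1 →
      (1 / (2 * π) ^ 2) * ∫ θ in (0:ℝ)..(2 * π), ∫ φ in (0:ℝ)..(2 * π),
          ‖(r * Complex.exp (θ * Complex.I) - 1 : ℂ)‖ ^ 2 /
            ‖(2 - r * Complex.exp (θ * Complex.I)
              - r * Complex.exp (φ * Complex.I) : ℂ)‖ ^ 2 =
        (2 - Real.sqrt (1 - r ^ 2)) / 4) ∧
    Tendsto (fun r : ℝ =>
      (1 / (2 * π) ^ 2) * ∫ θ in (0:ℝ)..(2 * π), ∫ φ in (0:ℝ)..(2 * π),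
          ‖(r * Complex.exp (θ * Complex.I) - 1 : ℂ)‖ ^ 2 /
            ‖(2 - r * Complex.exp (θ * Complex.I)
              - r * Complex.exp (φ * Complex.I) : ℂ)‖ ^ 2)
      (nhdsWithin 1 (Set.Ico 0 1)) (nhds (1 / 2)) ∧
    -- boundedness of the radial L² means: (z-1)/(2-z-w) belongs to H²(𝕋²)
    ∃ C : ℝ, ∀ r : ℝ, 0 ≤ r → r < 1 →
      (1 / (2 * π) ^ 2) * ∫ θ in (0:ℝ)..(2 * π), ∫ φ in (0:ℝ)..(2 * π),
          ‖(r * Complex.exp (θ * Complex.I) - 1 : ℂ)‖ ^ 2 /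
            ‖(2 - r * Complex.exp (θ * Complex.I)
              - r * Complex.exp (φ * Complex.I) : ℂ)‖ ^ 2 ≤ C := by
  have hmean := fun r (hr : 0 ≤ r) (hr1 : r < 1) ↦
    (circleAverage_circleAverage_eq_integral_integral
      (fun z w : ℂ ↦ ‖z - 1‖ ^ 2 / ‖2 - z - w‖ ^ 2) r).symm.trans
      (circleAverage_circleAverage_sq_norm_sub_one_div_sq_norm_two_sub_sub hr hr1)
  simp only [smul_eq_mul] at hmean
  refine ⟨hmean, ?_, 1 / 2, fun r hr hr1 ↦ ?_⟩
  · have hlim : ContinuousAt (fun r : ℝ ↦ (2 - √(1 - r ^ 2)) / 4) 1 := by fun_prop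
    refine Tendsto.congr'
      (eventuallyEq_nhdsWithin_of_eqOn fun r hr ↦ (hmean r hr.1 hr.2).symm) ?_
    convert hlim.tendsto.mono_left nhdsWithin_le_nhds using 2
    norm_num
  · rw [hmean r hr hr1]
    linarith [sqrt_nonneg (1 - r ^ 2)]
end

section
/- Let q ∈ ℂ[z,w] have no zeros on the open bidisk 𝔻². If q(z₀,w₀) = 0 for some z₀ with |z₀| = 1 and w₀ with |w₀| < 1, then q(z₀, w) = 0 for all w ∈ ℂ; equivalently (z - z₀) divides q. -/
open MvPolynomial

private lemma prod_map_le_aux (s : Multiset ℂ) (f g : ℂ → ℝ)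
    (h0 : ∀ r ∈ s, 0 ≤ f r) (h : ∀ r ∈ s, f r ≤ g r) :
    (s.map f).prod ≤ (s.map g).prod := by
  induction s using Multiset.induction with
  | empty => simp
  | cons a t ih =>
    simp only [Multiset.map_cons, Multiset.prod_cons]
    have h0t : ∀ r ∈ t, 0 ≤ f r := fun r hr => h0 r (Multiset.mem_cons_of_mem hr)
    have hpt : 0 ≤ (t.map f).prod := by
      apply Multiset.prod_nonneg
      intro x hx
      obtain ⟨r, hr, rfl⟩ := Multiset.mem_map.1 hx
      exact h0t r hr
    have hih := ih h0t (fun r hr => h r (Multiset.mem_cons_of_mem hr))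
    have ha : f a ≤ g a := h a (Multiset.mem_cons_self a t)
    have ha0 : 0 ≤ f a := h0 a (Multiset.mem_cons_self a t)
    exact mul_le_mul ha hih hpt (le_trans ha0 ha)

private lemma root_bound_aux {w₀ r : ℂ} (w : ℂ) (hw₀ : ‖w₀‖ < 1)
    (hr : 1 ≤ ‖r‖) :
    ‖w - r‖ ≤ (1 + ‖w‖) / (1 - ‖w₀‖) * ‖w₀ - r‖ := by
  have hb : (0:ℝ) < 1 - ‖w₀‖ := by linarith
  have ha : 0 ≤ ‖w‖ := norm_nonneg w
  have hb0 : 0 ≤ ‖w₀‖ := norm_nonneg w₀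
  have htri : ‖w - r‖ ≤ ‖w‖ + ‖r‖ := by
    have := norm_add_le w (-r)
    simpa [sub_eq_add_neg] using this
  have hlow : ‖r‖ - ‖w₀‖ ≤ ‖w₀ - r‖ := by
    have := norm_sub_norm_le r w₀
    rwa [norm_sub_rev r w₀] at this
  rw [div_mul_eq_mul_div, le_div_iff₀ hb]
  nlinarith [mul_nonneg (add_nonneg ha hb0) (sub_nonneg.2 hr)]

private lemma eval_bound_aux {p : Polynomial ℂ} {w₀ : ℂ} (hw₀ : ‖w₀‖ < 1)
    (hroots : ∀ r ∈ p.roots, 1 ≤ ‖r‖) (w : ℂ) {N : ℕ} (hN : p.natDegree ≤ N) :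
    ‖p.eval w‖ ≤
      ((1 + ‖w‖) / (1 - ‖w₀‖)) ^ N * ‖p.eval w₀‖ := by
  set K : ℝ := (1 + ‖w‖) / (1 - ‖w₀‖) with hK
  have hb : (0:ℝ) < 1 - ‖w₀‖ := by linarith
  have hK1 : 1 ≤ K := by
    rw [hK, le_div_iff₀ hb]
    have := norm_nonneg w
    have := norm_nonneg w₀
    nlinarith
  have hfac := (IsAlgClosed.splits p).eq_prod_roots
  have hev : ∀ y : ℂ, ‖p.eval y‖ =
      ‖p.leadingCoeff‖ * (p.roots.map fun a => ‖y - a‖).prod := by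
    intro y
    conv_lhs => rw [hfac]
    rw [Polynomial.eval_mul, Polynomial.eval_C, norm_mul, Polynomial.eval_multiset_prod]
    refine congrArg _ ((map_multiset_prod (normHom : ℂ →*₀ ℝ) _).trans ?_)
    rw [Multiset.map_map, Multiset.map_map]
    have hmaps : Multiset.map ((⇑(normHom : ℂ →*₀ ℝ) ∘ Polynomial.eval y) ∘ fun a => Polynomial.X - Polynomial.C a) p.roots
        = Multiset.map (fun a => ‖y - a‖) p.roots := by
      refine Multiset.map_congr rfl ?_
      intro a _
      simp
    rw [hmaps]
  have hnn : ∀ y : ℂ, 0 ≤ (p.roots.map fun a => ‖y - a‖).prod := by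
    intro y
    apply Multiset.prod_nonneg
    intro x hx
    obtain ⟨r, _, rfl⟩ := Multiset.mem_map.1 hx
    exact norm_nonneg _
  have step1 : (p.roots.map fun a => ‖w - a‖).prod ≤
      (p.roots.map fun a => K * ‖w₀ - a‖).prod := by
    apply prod_map_le_aux
    · intro r _; exact norm_nonneg _
    · intro r hr; exact root_bound_aux w hw₀ (hroots r hr)
  have step2 : (p.roots.map fun a => K * ‖w₀ - a‖).prod =
      K ^ Multiset.card p.roots * (p.roots.map fun a => ‖w₀ - a‖).prod := by
    rw [Multiset.prod_map_mul, Multiset.map_const', Multiset.prod_replicate]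
  have hcard : K ^ Multiset.card p.roots ≤ K ^ N :=
    pow_le_pow_right₀ hK1 (le_trans (Polynomial.card_roots' p) hN)
  have hL : 0 ≤ ‖p.leadingCoeff‖ := norm_nonneg _
  rw [hev w, hev w₀]
  calc ‖p.leadingCoeff‖ * (p.roots.map fun a => ‖w - a‖).prod
      ≤ ‖p.leadingCoeff‖ *
        (K ^ N * (p.roots.map fun a => ‖w₀ - a‖).prod) := by
        apply mul_le_mul_of_nonneg_left _ hL
        calc (p.roots.map fun a => ‖w - a‖).prod
            ≤ K ^ Multiset.card p.roots *
              (p.roots.map fun a => ‖w₀ - a‖).prod := by rw [← step2]; exact step1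
          _ ≤ K ^ N * (p.roots.map fun a => ‖w₀ - a‖).prod :=
              mul_le_mul_of_nonneg_right hcard (hnn w₀)
    _ = K ^ N * (‖p.leadingCoeff‖ *
        (p.roots.map fun a => ‖w₀ - a‖).prod) := by ring

theorem boundary_zero_forces_linear_factor
    (q : MvPolynomial (Fin 2) ℂ)
    (hq : ∀ z w : ℂ, ‖z‖ < 1 → ‖w‖ < 1 →
      MvPolynomial.eval (![z, w]) q ≠ 0)
    (z₀ w₀ : ℂ) (hz₀ : ‖z₀‖ = 1) (hw₀ : ‖w₀‖ < 1)
    (hzero : MvPolynomial.eval (![z₀, w₀]) q = 0) :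
    (MvPolynomial.X 0 - MvPolynomial.C z₀) ∣ q := by
  classical
  set e := MvPolynomial.finSuccEquiv ℂ 1 with he
  -- the swapped polynomial, for slicing in the w-direction
  set q' : MvPolynomial (Fin 2) ℂ := rename (Equiv.swap (0 : Fin 2) 1) q with hq'
  set pz : ℂ → Polynomial ℂ :=
    fun z => Polynomial.map (MvPolynomial.eval fun _ => z) (MvPolynomial.finSuccEquiv ℂ 1 q')
    with hpzdef
  have hcons : ∀ z w : ℂ, (![z, w] : Fin 2 → ℂ) = Fin.cons z (fun _ => w) := by
    intro z w
    funext i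
    refine Fin.cases ?_ (fun j => ?_) i
    · rfl
    · have : j = 0 := Subsingleton.elim _ _
      subst this; rfl
  have hpz : ∀ z w : ℂ, (pz z).eval w = MvPolynomial.eval (![z, w]) q := by
    intro z w
    have h1 : MvPolynomial.eval (Fin.cons w (fun _ => z) : Fin 2 → ℂ) q' =
        Polynomial.eval w (pz z) := MvPolynomial.eval_eq_eval_mv_eval' _ _ _
    rw [← h1, hq', MvPolynomial.eval_rename]
    have harg : ((Fin.cons w fun _ => z) ∘ ⇑(Equiv.swap (0:Fin 2) 1)) = ![z, w] := by
      funext i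
      fin_cases i <;>
        simp [Equiv.swap_apply_left, Equiv.swap_apply_right]
    rw [harg]
  set N : ℕ := (MvPolynomial.finSuccEquiv ℂ 1 q').natDegree with hN
  set K : ℂ → ℝ := fun w => (1 + ‖w‖) / (1 - ‖w₀‖) with hKdef
  -- the key inequality on the open disk
  have hineq : ∀ z : ℂ, ‖z‖ < 1 → ∀ w : ℂ,
      ‖MvPolynomial.eval (![z, w]) q‖ ≤
        K w ^ N * ‖MvPolynomial.eval (![z, w₀]) q‖ := by
    intro z hz w
    have hroots : ∀ r ∈ (pz z).roots, 1 ≤ ‖r‖ := by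
      intro r hr
      by_contra hcon
      push_neg at hcon
      have : (pz z).eval r = 0 := (Polynomial.isRoot_of_mem_roots hr)
      rw [hpz] at this
      exact hq z r hz hcon this
    have := eval_bound_aux hw₀ hroots w
      (Polynomial.natDegree_map_le : (pz z).natDegree ≤ N)
    rw [hpz, hpz] at this
    exact this
  -- the polynomial (in z) slices, for continuity
  have hG : ∀ w : ℂ, ∃ g : Polynomial ℂ, ∀ z : ℂ,
      MvPolynomial.eval (![z, w]) q = g.eval z := by
    intro w
    refine ⟨Polynomial.map (MvPolynomial.eval fun _ => w) (e q), fun z => ?_⟩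
    rw [hcons z w]
    exact MvPolynomial.eval_eq_eval_mv_eval' _ _ _
  -- z₀ is in the closure of the open unit disk
  have hz₀mem : z₀ ∈ closure (Metric.ball (0:ℂ) 1) := by
    rw [closure_ball (0:ℂ) one_ne_zero, Metric.mem_closedBall, dist_zero_right]
    rw [hz₀]
  have hNeBot : (nhdsWithin z₀ (Metric.ball (0:ℂ) 1)).NeBot :=
    mem_closure_iff_nhdsWithin_neBot.mp hz₀mem
  -- the limit argument: q(z₀, w) = 0 for every w
  have key : ∀ w : ℂ, MvPolynomial.eval (![z₀, w]) q = 0 := by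
    intro w
    obtain ⟨g, hg⟩ := hG w
    obtain ⟨g0, hg0⟩ := hG w₀
    have t1 : Filter.Tendsto (fun z => ‖g.eval z‖)
        (nhdsWithin z₀ (Metric.ball (0:ℂ) 1)) (nhds (‖g.eval z₀‖)) :=
      ((continuous_norm.comp g.continuous).tendsto z₀).mono_left nhdsWithin_le_nhds
    have t2 : Filter.Tendsto (fun z => K w ^ N * ‖g0.eval z‖)
        (nhdsWithin z₀ (Metric.ball (0:ℂ) 1))
        (nhds (K w ^ N * ‖g0.eval z₀‖)) :=
      (((continuous_norm.comp g0.continuous).tendsto z₀).mono_left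
        nhdsWithin_le_nhds).const_mul _
    have hev : ∀ᶠ z in nhdsWithin z₀ (Metric.ball (0:ℂ) 1),
        ‖g.eval z‖ ≤ K w ^ N * ‖g0.eval z‖ := by
      filter_upwards [self_mem_nhdsWithin] with z hz
      rw [← hg, ← hg0]
      exact hineq z (by simpa [Complex.dist_eq] using Metric.mem_ball.mp hz) w
    have hle : ‖g.eval z₀‖ ≤ K w ^ N * ‖g0.eval z₀‖ :=
      le_of_tendsto_of_tendsto t1 t2 hev
    rw [← hg0, hzero] at hle
    simp only [norm_zero, mul_zero] at hle
    have : ‖g.eval z₀‖ = 0 := le_antisymm hle (norm_nonneg _)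
    rw [← hg] at this
    exact norm_eq_zero.mp this
  -- hence the coefficient-wise evaluation at z₀ is zero
  have hA : Polynomial.eval (MvPolynomial.C z₀) (e q) = 0 := by
    apply MvPolynomial.funext
    intro x
    rw [map_zero]
    have hhom : (MvPolynomial.eval x : MvPolynomial (Fin 1) ℂ →+* ℂ)
          (Polynomial.eval (MvPolynomial.C z₀) (e q)) =
        Polynomial.eval z₀ (Polynomial.map (MvPolynomial.eval x) (e q)) := by
      rw [Polynomial.eval, Polynomial.hom_eval₂, Polynomial.eval_map]
      simp [Polynomial.eval₂]
    rw [hhom, ← MvPolynomial.eval_eq_eval_mv_eval']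
    have : (Fin.cons z₀ x : Fin 2 → ℂ) = ![z₀, x 0] := by
      funext i
      refine Fin.cases ?_ (fun j => ?_) i
      · rfl
      · have : j = 0 := Subsingleton.elim _ _
        subst this; rfl
    rw [this]
    exact key (x 0)
  -- transport the divisibility back
  have hdvd : (Polynomial.X - Polynomial.C (MvPolynomial.C z₀)) ∣ e q :=
    Polynomial.dvd_iff_isRoot.mpr hA
  obtain ⟨c, hc⟩ := hdvd
  refine ⟨e.symm c, ?_⟩
  apply e.injective
  rw [map_mul, map_sub, AlgEquiv.apply_symm_apply]
  rw [show e (MvPolynomial.X 0) = Polynomial.X from MvPolynomial.finSuccEquiv_X_zero]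
  have hC : e (MvPolynomial.C z₀) = Polynomial.C (MvPolynomial.C z₀) := by
    rw [he, MvPolynomial.finSuccEquiv_apply]
    simp
  rw [hC, ← hc]
end

section
/- Let Ψ₁, Ψ₂: 𝔻 → ℂ^{n×n} be holomorphic matrix-valued functions, each contraction-valued on 𝔻 (operator norm ≤ 1), and suppose Ψ₁(w)Ψ₂(w) = I for all w ∈ 𝔻. Then Ψ₁ and Ψ₂ are both constant and equal to unitary matrices. -/
open scoped Matrix.Norms.L2Operator

/-!
With `V = Ψ₂ 0`, the map `w ↦ V * Ψ₁ w` is holomorphic, contraction-valued and equal to `1` at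
`0`. For each vector `x`, `w ↦ ⟪x, V Ψ₁(w) x⟫` then attains its maximal modulus `‖x‖²` at `0`, so
by the maximum modulus principle it is constantly `‖x‖²`, and equality in Cauchy–Schwarz forces
`V Ψ₁(w) x = x`. Hence `Ψ₁ ≡ Ψ₁ 0` and `Ψ₂ ≡ Ψ₂ 0` are mutually inverse contractions, and in a
C⋆-algebra such a pair is unitary: `1 = a⋆ (b⋆ b) a ≤ a⋆ a ≤ 1`.
-/

open Set Metric
open scoped InnerProductSpace

theorem eq_of_norm_le_of_inner_eq_norm_sq {𝕜 E : Type*} [RCLike 𝕜] [NormedAddCommGroup E]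
    [InnerProductSpace 𝕜 E] {x y : E} (hy : ‖y‖ ≤ ‖x‖) (h : ⟪x, y⟫_𝕜 = (‖x‖ : 𝕜) ^ 2) :
    y = x := by
  have hre : RCLike.re ⟪y, x⟫_𝕜 = ‖x‖ ^ 2 := by
    rw [← inner_conj_symm, RCLike.conj_re, h]
    norm_cast
  have hsq : ‖y - x‖ ^ 2 ≤ 0 := by
    rw [@norm_sub_sq 𝕜, hre]
    nlinarith [norm_nonneg y]
  exact sub_eq_zero.mp (norm_eq_zero.mp (by nlinarith [norm_nonneg (y - x)]))

theorem ContinuousLinearMap.eqOn_one_of_norm_le_one {V E : Type*} [NormedAddCommGroup V]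
    [NormedSpace ℂ V] [NormedAddCommGroup E] [InnerProductSpace ℂ E] {F : V → E →L[ℂ] E}
    {U : Set V} {c : V} (hU : IsPreconnected U) (hUo : IsOpen U) (hF : DifferentiableOn ℂ F U)
    (hle : ∀ w ∈ U, ‖F w‖ ≤ 1) (hc : c ∈ U) (hFc : F c = 1) : EqOn F 1 U := by
  intro w hw
  ext x
  rw [Pi.one_apply, one_apply_eq_self]
  set g : V → ℂ := fun z => ⟪x, F z x⟫_ℂ
  have hg : DifferentiableOn ℂ g U :=
    (innerSL ℂ x).differentiable.comp_differentiableOn (hF.clm_apply (differentiableOn_const x))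
  have hgc : g c = (‖x‖ : ℂ) ^ 2 := by simp [g, hFc, inner_self_eq_norm_sq_to_K]
  have hmax : IsMaxOn (norm ∘ g) U c := fun z hz => by
    calc ‖g z‖ ≤ ‖x‖ * ‖F z x‖ := norm_inner_le_norm (𝕜 := ℂ) x _
      _ ≤ ‖x‖ * ‖x‖ := by
        gcongr
        exact (F z).le_of_opNorm_le (hle z hz) x |>.trans_eq (one_mul _)
      _ = ‖g c‖ := by rw [hgc]; simp [sq]
  refine eq_of_norm_le_of_inner_eq_norm_sq (𝕜 := ℂ)
    ((F w).le_of_opNorm_le (hle w hw) x |>.trans_eq (one_mul _)) ?_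
  exact (Complex.eqOn_of_isPreconnected_of_isMaxOn_norm hU hUo hg hc hmax hw).trans hgc

theorem Matrix.eqOn_one_of_l2_opNorm_le_one {ι V : Type*} [Fintype ι] [DecidableEq ι]
    [NormedAddCommGroup V] [NormedSpace ℂ V] {F : V → Matrix ι ι ℂ} {U : Set V} {c : V}
    (hU : IsPreconnected U) (hUo : IsOpen U) (hF : DifferentiableOn ℂ F U)
    (hle : ∀ w ∈ U, ‖F w‖ ≤ 1) (hc : c ∈ U) (hFc : F c = 1) : EqOn F 1 U := by
  let T : Matrix ι ι ℂ →L[ℂ] EuclideanSpace ℂ ι →L[ℂ] EuclideanSpace ℂ ι :=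
    LinearMap.toContinuousLinearMap (toEuclideanCLM (n := ι) (𝕜 := ℂ)).toAlgEquiv.toLinearMap
  have hT : EqOn (T ∘ F) 1 U :=
    ContinuousLinearMap.eqOn_one_of_norm_le_one hU hUo (T.differentiable.comp_differentiableOn hF)
      hle hc (by simp [T, hFc])
  intro w hw
  exact toEuclideanCLM.injective (by simpa [T] using hT hw)

theorem CStarAlgebra.mem_unitary_of_norm_le_one {A : Type*} [CStarAlgebra A] [PartialOrder A]
    [StarOrderedRing A] {a b : A} (ha : ‖a‖ ≤ 1) (hb : ‖b‖ ≤ 1) (hab : a * b = 1)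
    (hba : b * a = 1) : a ∈ unitary A := by
  have star_mul_self_le_one {x : A} (hx : ‖x‖ ≤ 1) : star x * x ≤ 1 := by
    rw [← norm_le_one_iff_of_nonneg _ (star_mul_self_nonneg x), CStarRing.norm_star_mul_self]
    exact mul_le_one₀ hx (norm_nonneg x) hx
  have hstar : star a * a = 1 := by
    refine le_antisymm (star_mul_self_le_one ha) ?_
    calc (1 : A) = star (b * a) * (b * a) := by simp [hba]
      _ = star a * (star b * b) * a := by simp only [star_mul, mul_assoc]
      _ ≤ star a * 1 * a := star_left_conjugate_le_conjugate (star_mul_self_le_one hb) a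
      _ = star a * a := by rw [mul_one]
  have hb_eq : b = star a := (left_inv_eq_right_inv hstar hab).symm
  exact ⟨hstar, hb_eq ▸ hab⟩

open scoped MatrixOrder in
theorem Matrix.mem_unitaryGroup_of_l2_opNorm_le_one {ι : Type*} [Fintype ι] [DecidableEq ι]
    {A B : Matrix ι ι ℂ} (hA : ‖A‖ ≤ 1) (hB : ‖B‖ ≤ 1) (hAB : A * B = 1) :
    A ∈ unitaryGroup ι ℂ :=
  CStarAlgebra.mem_unitary_of_norm_le_one hA hB hAB (mul_eq_one_comm.mp hAB)

theorem inverse_pair_of_contractive_holomorphic_is_constant_unitary_general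
    {n : ℕ} (Ψ₁ Ψ₂ : ℂ → Matrix (Fin n) (Fin n) ℂ)
    (h₁ : DifferentiableOn ℂ Ψ₁ (Metric.ball 0 1))
    (hc₁ : ∀ w ∈ Metric.ball (0 : ℂ) 1, ‖Ψ₁ w‖ ≤ 1)
    (hc₂ : ∀ w ∈ Metric.ball (0 : ℂ) 1, ‖Ψ₂ w‖ ≤ 1)
    (hinv : ∀ w ∈ Metric.ball (0 : ℂ) 1, Ψ₁ w * Ψ₂ w = 1) :
    ∃ U₁ ∈ Matrix.unitaryGroup (Fin n) ℂ, ∃ U₂ ∈ Matrix.unitaryGroup (Fin n) ℂ,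
      (∀ w ∈ Metric.ball (0 : ℂ) 1, Ψ₁ w = U₁) ∧
      (∀ w ∈ Metric.ball (0 : ℂ) 1, Ψ₂ w = U₂) := by
  have h0 : (0 : ℂ) ∈ ball (0 : ℂ) 1 := mem_ball_self one_pos
  set U := Ψ₁ 0
  set V := Ψ₂ 0
  have hUV : U * V = 1 := hinv 0 h0
  have hVU : V * U = 1 := mul_eq_one_comm.mp hUV
  have hVΨ₁ : EqOn (fun w => V * Ψ₁ w) 1 (ball 0 1) :=
    Matrix.eqOn_one_of_l2_opNorm_le_one (convex_ball 0 1).isPreconnected isOpen_ball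
      ((differentiableOn_const V).mul h₁)
      (fun w hw => (Matrix.l2_opNorm_mul _ _).trans
        (mul_le_one₀ (hc₂ 0 h0) (norm_nonneg _) (hc₁ w hw)))
      h0 hVU
  have hΨ₁ (w : ℂ) (hw : w ∈ ball 0 1) : Ψ₁ w = U := (left_inv_eq_right_inv hUV (hVΨ₁ hw)).symm
  refine ⟨U, Matrix.mem_unitaryGroup_of_l2_opNorm_le_one (hc₁ 0 h0) (hc₂ 0 h0) hUV,
    V, Matrix.mem_unitaryGroup_of_l2_opNorm_le_one (hc₂ 0 h0) (hc₁ 0 h0) hVU, hΨ₁, fun w hw => ?_⟩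
  exact (left_inv_eq_right_inv hVU (hΨ₁ w hw ▸ hinv w hw)).symm

theorem inverse_pair_of_contractive_holomorphic_is_constant_unitary
    {n : ℕ} (Ψ₁ Ψ₂ : ℂ → Matrix (Fin n) (Fin n) ℂ)
    (h₁ : DifferentiableOn ℂ Ψ₁ (Metric.ball 0 1))
    (h₂ : DifferentiableOn ℂ Ψ₂ (Metric.ball 0 1))
    (hc₁ : ∀ w ∈ Metric.ball (0 : ℂ) 1, ‖Ψ₁ w‖ ≤ 1)
    (hc₂ : ∀ w ∈ Metric.ball (0 : ℂ) 1, ‖Ψ₂ w‖ ≤ 1)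
    (hinv : ∀ w ∈ Metric.ball (0 : ℂ) 1, Ψ₁ w * Ψ₂ w = 1) :
    ∃ U₁ ∈ Matrix.unitaryGroup (Fin n) ℂ, ∃ U₂ ∈ Matrix.unitaryGroup (Fin n) ℂ,
      (∀ w ∈ Metric.ball (0 : ℂ) 1, Ψ₁ w = U₁) ∧
      (∀ w ∈ Metric.ball (0 : ℂ) 1, Ψ₂ w = U₂) :=
  inverse_pair_of_contractive_holomorphic_is_constant_unitary_general Ψ₁ Ψ₂ h₁ hc₁ hc₂ hinv
end

section
/- Suppose E, Ẽ: ℂ → ℂ^{n×n} are matrix polynomials, both invertible at every point of the open unit disk, and E(w)*E(w) = Ẽ(w)*Ẽ(w) for all w on the unit circle. Then there exists a constant n×n unitary matrix U with Ẽ(w) = U E(w) for all w ∈ ℂ. -/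
/-!
Write `Θ = Ẽ E⁻¹ = Ẽ (adj E) / det E`. This rational matrix function has no poles: none in the
open disk, where `det E ≠ 0`; none on the circle, where `Θ` is unitary and hence entrywise
bounded by `1`; and none outside the closed disk, because the circle hypothesis becomes the
polynomial identity `E♯ E = Ẽ♯ Ẽ` for the paraconjugates `M♯(w) = w ^ N M(1 / w̄)ᴴ`, so that
`Θ = (Ẽ♯)⁻¹ E♯`, and `det Ẽ♯` only vanishes in the closed disk. Hence `Ẽ = C E` for a polynomial
matrix `C`, and symmetrically `E = C' Ẽ`. On the circle `C` is unitary with inverse `C'`, so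
`C(w) = C'(w)ᴴ`: every entry of `C` is a polynomial in `w` that is also a polynomial in `1 / w`,
hence constant.
-/

open Polynomial Matrix Filter Topology ComplexConjugate Metric

namespace Polynomial

theorem dvd_of_forall_pow_rootMultiplicity_dvd {K : Type*} [Field K] [IsAlgClosed K]
    {p q : K[X]} (hp : p ≠ 0) (h : ∀ a, (X - C a) ^ p.rootMultiplicity a ∣ q) : p ∣ q := by
  classical
  rcases eq_or_ne q 0 with rfl | hq
  · exact dvd_zero p
  refine (IsAlgClosed.splits p).dvd_of_roots_le_roots hp (Multiset.le_iff_count.2 fun a => ?_)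
  rw [count_roots, count_roots, le_rootMultiplicity_iff hq]
  exact h a

theorem eval_reflect {K : Type*} [Field K] {p : K[X]} {N : ℕ} (hp : p.natDegree ≤ N) {w : K}
    (hw : w ≠ 0) : (reflect N p).eval w = w ^ N * p.eval w⁻¹ := by
  let := invertibleOfNonzero (inv_ne_zero hw)
  have h := eval₂_reflect_mul_pow (RingHom.id K) w⁻¹ N p hp
  rw [invOf_eq_inv, inv_inv] at h
  rw [eval, eval, ← h, mul_comm, mul_assoc, ← mul_pow, inv_mul_cancel₀ hw, one_pow, mul_one]

theorem natDegree_eq_zero_of_eval_inv_eq {K : Type*} [Field K] {p q : K[X]} {S : Set K}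
    (hS : S.Infinite) (h : ∀ w ∈ S, p.eval w⁻¹ = q.eval w) : q.natDegree = 0 := by
  rcases eq_or_ne q 0 with rfl | hq
  · exact natDegree_zero
  have hreflect : X ^ p.natDegree * q = reflect p.natDegree p := by
    refine eq_of_infinite_eval_eq _ _ ((hS.sdiff (Set.finite_singleton 0)).mono ?_)
    rintro w ⟨hwS, hw0⟩
    simp only [Set.mem_ofPred_eq, eval_mul, eval_pow, eval_X, eval_reflect le_rfl hw0, h w hwS]
  have := congrArg natDegree hreflect
  rw [natDegree_X_pow_mul (n := p.natDegree) hq] at this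
  have := this.le.trans natDegree_reflect_le
  omega

theorem pow_rootMultiplicity_dvd_of_norm_le {𝕜 : Type*} [NormedField 𝕜] {s : Set 𝕜} {a : 𝕜}
    (ha : AccPt a (𝓟 s)) {p q : 𝕜[X]} (hp : p ≠ 0)
    (h : ∀ w ∈ s, p.eval w ≠ 0 → ‖q.eval w‖ ≤ ‖p.eval w‖) :
    (X - C a) ^ p.rootMultiplicity a ∣ q := by
  rcases eq_or_ne q 0 with rfl | hq
  · exact dvd_zero _
  obtain ⟨p₁, hp₁, hp₁a⟩ := p.exists_eq_pow_rootMultiplicity_mul_and_not_dvd hp a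
  obtain ⟨q₁, hq₁, hq₁a⟩ := q.exists_eq_pow_rootMultiplicity_mul_and_not_dvd hq a
  rw [dvd_iff_isRoot, IsRoot] at hp₁a hq₁a
  rw [← le_rootMultiplicity_iff hq]
  by_contra! hlt
  set e := p.rootMultiplicity a - q.rootMultiplicity a
  have : (𝓝[≠] a ⊓ 𝓟 s).NeBot := ha
  have hF : 𝓝[≠] a ⊓ 𝓟 s ≤ 𝓝 a := inf_le_left.trans nhdsWithin_le_nhds
  have hp₁ev : ∀ᶠ w in 𝓝 a, p₁.eval w ≠ 0 := p₁.continuous.continuousAt.eventually_ne hp₁a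
  have hbound : ∀ᶠ w in 𝓝[≠] a ⊓ 𝓟 s, ‖q₁.eval w‖ ≤ ‖w - a‖ ^ e * ‖p₁.eval w‖ := by
    filter_upwards [inf_le_left (a := 𝓝[≠] a) self_mem_nhdsWithin, inf_le_right (a := 𝓝[≠] a)
      (mem_principal_self s), hF hp₁ev] with w hwa hws hp₁w
    have hwa' : 0 < ‖w - a‖ := norm_pos_iff.2 (sub_ne_zero.2 hwa)
    have := h w hws (by
      rw [hp₁, eval_mul, eval_pow]
      exact mul_ne_zero (pow_ne_zero _ (by simpa [sub_eq_zero] using hwa)) hp₁w)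
    rw [hp₁, hq₁] at this
    simp only [eval_mul, eval_pow, eval_sub, eval_X, eval_C, norm_mul, norm_pow] at this
    rw [← Nat.sub_add_cancel hlt.le, pow_add] at this
    exact le_of_mul_le_mul_left (this.trans_eq (by ring)) (pow_pos hwa' _)
  have hlim : Tendsto (fun w => ‖w - a‖ ^ e * ‖p₁.eval w‖) (𝓝[≠] a ⊓ 𝓟 s) (𝓝 0) := by
    have : Tendsto (fun w => ‖w - a‖ ^ e * ‖p₁.eval w‖) (𝓝 a) (𝓝 (‖a - a‖ ^ e * ‖p₁.eval a‖)) :=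
      (((continuous_sub_right a).norm.pow e).mul p₁.continuous.norm).tendsto a
    rw [sub_self, norm_zero, zero_pow (by omega), zero_mul] at this
    exact this.mono_left hF
  have := le_of_tendsto_of_tendsto ((q₁.continuous.norm.tendsto a).mono_left hF) hlim hbound
  exact hq₁a (norm_le_zero_iff.1 this)

end Polynomial

theorem Complex.preperfect_unit_sphere : Preperfect (sphere (0 : ℂ) 1) :=
  (isPreconnected_sphere (by simp [rank_real_complex]) 0 1).preperfect_of_nontrivial
    ⟨1, by simp, -1, by simp, by norm_num⟩

theorem Complex.infinite_unit_sphere : (sphere (0 : ℂ) 1).Infinite :=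
  Set.Infinite.of_accPt (preperfect_unit_sphere 1 (by simp))

namespace Matrix

variable {m n o ι : Type*} [Fintype ι] [DecidableEq ι]

section Eval

variable {R : Type*} [CommRing R]

theorem map_eval_mul [Fintype n] (M : Matrix m n R[X]) (M' : Matrix n o R[X]) (w : R) :
    (M * M').map (eval w) = M.map (eval w) * M'.map (eval w) :=
  Matrix.map_mul (f := evalRingHom w)

theorem det_map_eval (M : Matrix ι ι R[X]) (w : R) : (M.map (eval w)).det = M.det.eval w :=
  (RingHom.map_det (evalRingHom w) M).symm

theorem adjugate_map_eval (M : Matrix ι ι R[X]) (w : R) :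
    (M.map (eval w)).adjugate = M.adjugate.map (eval w) :=
  (RingHom.map_adjugate (evalRingHom w) M).symm

theorem isUnit_map_eval_iff {M : Matrix ι ι R[X]} {w : R} :
    IsUnit (M.map (eval w)) ↔ IsUnit (M.det.eval w) := by
  rw [isUnit_iff_isUnit_det, det_map_eval]

end Eval

theorem exists_eq_mul_of_det_dvd {R : Type*} [CommRing R] [IsDomain R] {M F : Matrix ι ι R}
    (hM : M.det ≠ 0) (h : ∀ i j, M.det ∣ (F * M.adjugate) i j) : ∃ C, F = C * M := by
  choose C hC using h
  refine ⟨of C, smul_right_injective _ hM ?_⟩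
  calc M.det • F = F * M.adjugate * M := by
        rw [Matrix.mul_assoc, adjugate_mul, mul_smul_comm, Matrix.mul_one]
    _ = M.det • of C * M := by congr 1; ext i j; exact hC i j
    _ = M.det • (of C * M) := smul_mul_assoc _ _ _

theorem mul_nonsing_inv_mem_unitaryGroup {R : Type*} [CommRing R] [StarRing R]
    {A B : Matrix ι ι R} (hA : IsUnit A.det) (h : Aᴴ * A = Bᴴ * B) :
    B * A⁻¹ ∈ unitaryGroup ι R := by
  rw [mem_unitaryGroup_iff', star_eq_conjTranspose]
  calc (B * A⁻¹)ᴴ * (B * A⁻¹) = A⁻¹ᴴ * (Bᴴ * B) * A⁻¹ := by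
        simp only [conjTranspose_mul, Matrix.mul_assoc]
    _ = (A * A⁻¹)ᴴ * (A * A⁻¹) := by
        rw [← h]; simp only [conjTranspose_mul, Matrix.mul_assoc]
    _ = 1 := by rw [mul_nonsing_inv A hA, conjTranspose_one, Matrix.mul_one]

theorem eq_conjTranspose_of_mul_eq_one {R : Type*} [CommRing R] [StarRing R]
    {U V : Matrix ι ι R} (hU : U ∈ unitaryGroup ι R) (h : V * U = 1) : U = Vᴴ := by
  have hV : V = Uᴴ := by
    rw [← Matrix.mul_one V, ← (mem_unitaryGroup_iff.1 hU), ← Matrix.mul_assoc, h,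
      Matrix.one_mul, star_eq_conjTranspose]
  rw [hV, conjTranspose_conjTranspose]

theorem norm_mul_adjugate_apply_le {𝕜 : Type*} [RCLike 𝕜] {A B : Matrix ι ι 𝕜}
    (hA : A.det ≠ 0) (h : Aᴴ * A = Bᴴ * B) (i j : ι) :
    ‖(B * A.adjugate) i j‖ ≤ ‖A.det‖ := by
  have hAu : IsUnit A.det := isUnit_iff_ne_zero.2 hA
  have hadj : B * A.adjugate = A.det • (B * A⁻¹) := by
    rw [inv_def, mul_smul_comm, smul_smul, Ring.mul_inverse_cancel _ hAu, one_smul]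
  rw [hadj, smul_apply, norm_smul]
  exact mul_le_of_le_one_right (norm_nonneg _)
    (entry_norm_bound_of_unitary (mul_nonsing_inv_mem_unitaryGroup hAu h) i j)

/-- The paraconjugate `w ^ N • M(1 / conj w)ᴴ` of `M`, a polynomial matrix when `N ≥ deg M`. -/
noncomputable def starReflect (N : ℕ) (M : Matrix m n ℂ[X]) : Matrix n m ℂ[X] :=
  of fun i j => reflect N ((M j i).map (starRingEnd ℂ))

theorem starReflect_map_eval {N : ℕ} {M : Matrix m n ℂ[X]} (hM : ∀ i j, (M i j).natDegree ≤ N)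
    {w : ℂ} (hw : w ≠ 0) :
    (M.starReflect N).map (eval w) = w ^ N • (M.map (eval (conj w⁻¹)))ᴴ := by
  ext i j
  simp only [starReflect, map_apply, of_apply, smul_apply, conjTranspose_apply, smul_eq_mul,
    eval_reflect (natDegree_map_le.trans (hM j i)) hw, eval_map, RCLike.star_def,
    ← eval₂_at_apply, Complex.conj_conj]

theorem starReflect_mul_eq_of_forall_norm_eq_one {N : ℕ} [Fintype m] {E F : Matrix m n ℂ[X]}
    (hE : ∀ i j, (E i j).natDegree ≤ N) (hF : ∀ i j, (F i j).natDegree ≤ N)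
    (h : ∀ w : ℂ, ‖w‖ = 1 →
      (E.map (eval w))ᴴ * E.map (eval w) = (F.map (eval w))ᴴ * F.map (eval w)) :
    E.starReflect N * E = F.starReflect N * F := by
  refine Matrix.ext fun i j => ?_
  refine eq_of_infinite_eval_eq _ _ (Complex.infinite_unit_sphere.mono fun w hw => ?_)
  have hw1 : ‖w‖ = 1 := by simpa using hw
  have hw0 : w ≠ 0 := by rintro rfl; simp at hw1
  have hmap : (E.starReflect N * E).map (eval w) = (F.starReflect N * F).map (eval w) := by
    rw [map_eval_mul, map_eval_mul, starReflect_map_eval hE hw0, starReflect_map_eval hF hw0,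
      Complex.inv_eq_conj hw1, Complex.conj_conj, Matrix.smul_mul, Matrix.smul_mul, h w hw1]
  exact congrFun (congrFun hmap i) j

theorem eval_det_starReflect_ne_zero {N : ℕ} {M : Matrix ι ι ℂ[X]}
    (hM : ∀ i j, (M i j).natDegree ≤ N) {w : ℂ} (hw : w ≠ 0)
    (h : M.det.eval (conj w⁻¹) ≠ 0) : (M.starReflect N).det.eval w ≠ 0 := by
  rw [← det_map_eval, starReflect_map_eval hM hw, det_smul, det_conjTranspose, det_map_eval]
  exact mul_ne_zero (pow_ne_zero _ (pow_ne_zero _ hw)) (star_ne_zero.2 h)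

theorem det_dvd_mul_adjugate_apply {E F : Matrix ι ι ℂ[X]}
    (hE : ∀ w : ℂ, ‖w‖ < 1 → E.det.eval w ≠ 0) (hF : ∀ w : ℂ, ‖w‖ < 1 → F.det.eval w ≠ 0)
    (h : ∀ w : ℂ, ‖w‖ = 1 →
      (E.map (eval w))ᴴ * E.map (eval w) = (F.map (eval w))ᴴ * F.map (eval w))
    (i j : ι) : E.det ∣ (F * E.adjugate) i j := by
  obtain ⟨N, hN⟩ := Finite.exists_le fun ij : ι × ι =>
    max (E ij.1 ij.2).natDegree (F ij.1 ij.2).natDegree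
  have hEN : ∀ i j, (E i j).natDegree ≤ N := fun i j => (le_max_left _ _).trans (hN (i, j))
  have hFN : ∀ i j, (F i j).natDegree ≤ N := fun i j => (le_max_right _ _).trans (hN (i, j))
  have hE0 : E.det ≠ 0 := fun h0 => hE 0 (by simp) (by simp [h0])
  -- `F E⁻¹ = (F.starReflect N)⁻¹ (E.starReflect N)`, whose denominator has no zeros outside
  -- the closed disk.
  have hreflect : E.det • ((F.starReflect N).adjugate * E.starReflect N) =
      (F.starReflect N).det • (F * E.adjugate) := by
    calc E.det • ((F.starReflect N).adjugate * E.starReflect N)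
        = (F.starReflect N).adjugate * (E.starReflect N * E * E.adjugate) := by
          rw [Matrix.mul_assoc _ E, mul_adjugate, Matrix.mul_smul, Matrix.mul_one,
            Matrix.mul_smul]
      _ = (F.starReflect N).adjugate * (F.starReflect N * F * E.adjugate) := by
          rw [starReflect_mul_eq_of_forall_norm_eq_one hEN hFN h]
      _ = (F.starReflect N).det • (F * E.adjugate) := by
          rw [Matrix.mul_assoc _ F, ← Matrix.mul_assoc, adjugate_mul, Matrix.smul_mul,
            Matrix.one_mul]
  refine dvd_of_forall_pow_rootMultiplicity_dvd hE0 fun a => ?_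
  rcases lt_trichotomy ‖a‖ 1 with ha | ha | ha
  · rw [rootMultiplicity_eq_zero (hE a ha), pow_zero]
    exact one_dvd _
  · refine pow_rootMultiplicity_dvd_of_norm_le
      (Complex.preperfect_unit_sphere a (by simpa using ha)) hE0 fun w hw hdw => ?_
    rw [← det_map_eval] at hdw ⊢
    have := norm_mul_adjugate_apply_le hdw (h w (by simpa using hw)) i j
    rwa [adjugate_map_eval, ← map_eval_mul] at this
  · have ha0 : a ≠ 0 := by rintro rfl; norm_num at ha
    have hdvd : (X - C a) ^ E.det.rootMultiplicity a ∣
        (F.starReflect N).det * (F * E.adjugate) i j :=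
      (pow_rootMultiplicity_dvd _ a).trans
        ⟨_, by simpa using (congrFun (congrFun hreflect i) j).symm⟩
    refine (prime_X_sub_C a).pow_dvd_of_dvd_mul_left _ ?_ hdvd
    rw [dvd_iff_isRoot]
    refine eval_det_starReflect_ne_zero hFN ha0 (hF _ ?_)
    rw [Complex.norm_conj, norm_inv]
    exact inv_lt_one_of_one_lt₀ ha

theorem exists_mem_unitaryGroup_forall_map_eval_eq {C C' : Matrix ι ι ℂ[X]} {S : Set ℂ}
    (hS : S.Infinite) (hS₁ : S ⊆ sphere 0 1)
    (hC : ∀ w ∈ S, C.map (eval w) ∈ unitaryGroup ι ℂ)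
    (hC' : ∀ w ∈ S, C'.map (eval w) * C.map (eval w) = 1) :
    ∃ U ∈ unitaryGroup ι ℂ, ∀ w, C.map (eval w) = U := by
  have hconst : ∀ i j, (C i j).natDegree = 0 := fun i j =>
    natDegree_eq_zero_of_eval_inv_eq (p := (C' j i).map (starRingEnd ℂ)) hS fun w hw => by
      have := congrFun (congrFun (eq_conjTranspose_of_mul_eq_one (hC w hw) (hC' w hw)) i) j
      rw [map_apply, conjTranspose_apply, map_apply, RCLike.star_def] at this
      rw [this, eval_map, Complex.inv_eq_conj (by simpa using hS₁ hw), eval₂_at_apply]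
  have hmap : ∀ w, C.map (eval w) = C.map (eval 0) := fun w => by
    ext i j
    rw [map_apply, map_apply, eq_C_of_natDegree_eq_zero (hconst i j), eval_C, eval_C]
  obtain ⟨w, hw⟩ := hS.nonempty
  exact ⟨C.map (eval 0), hmap w ▸ hC w hw, hmap⟩

end Matrix

theorem matrix_polynomial_unitary_equivalence {n : ℕ}
    (E E2 : Matrix (Fin n) (Fin n) (Polynomial ℂ))
    (hE : ∀ w : ℂ, ‖w‖ < 1 → IsUnit (E.map (Polynomial.eval w)))
    (hE2 : ∀ w : ℂ, ‖w‖ < 1 → IsUnit (E2.map (Polynomial.eval w)))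
    (hcirc : ∀ w : ℂ, ‖w‖ = 1 →
      (E.map (Polynomial.eval w)).conjTranspose * E.map (Polynomial.eval w) =
        (E2.map (Polynomial.eval w)).conjTranspose * E2.map (Polynomial.eval w)) :
    ∃ U ∈ Matrix.unitaryGroup (Fin n) ℂ,
      ∀ w : ℂ, E2.map (Polynomial.eval w) = U * E.map (Polynomial.eval w) := by
  have hdetE w hw : E.det.eval w ≠ 0 := (isUnit_map_eval_iff.1 (hE w hw)).ne_zero
  have hdetE2 w hw : E2.det.eval w ≠ 0 := (isUnit_map_eval_iff.1 (hE2 w hw)).ne_zero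
  have hE0 : E.det ≠ 0 := fun h0 => hdetE 0 (by simp) (by simp [h0])
  have hE20 : E2.det ≠ 0 := fun h0 => hdetE2 0 (by simp) (by simp [h0])
  obtain ⟨C, hC⟩ := exists_eq_mul_of_det_dvd hE0 (det_dvd_mul_adjugate_apply hdetE hdetE2 hcirc)
  obtain ⟨C', hC'⟩ := exists_eq_mul_of_det_dvd hE20
    (det_dvd_mul_adjugate_apply hdetE2 hdetE fun w hw => (hcirc w hw).symm)
  set S := sphere (0 : ℂ) 1 \ {w | E.det.eval w = 0}
  have hS : S.Infinite := Complex.infinite_unit_sphere.sdiff (finite_setOfPred_isRoot hE0)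
  have hunit : ∀ w ∈ S, IsUnit (E.map (eval w)).det := fun w hw => by
    rw [det_map_eval]; exact isUnit_iff_ne_zero.2 hw.2
  obtain ⟨U, hU, hCU⟩ := exists_mem_unitaryGroup_forall_map_eval_eq hS Set.sdiff_subset
    (fun w hw => by
      simpa [hC, map_eval_mul, mul_nonsing_inv_cancel_right (h := hunit w hw)] using
        mul_nonsing_inv_mem_unitaryGroup (hunit w hw) (hcirc w (by simpa using hw.1)))
    (fun w hw => by
      refine ((isUnit_iff_isUnit_det _).2 (hunit w hw)).mul_left_injective ?_
      change C'.map (eval w) * C.map (eval w) * E.map (eval w) = 1 * E.map (eval w)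
      rw [Matrix.one_mul, Matrix.mul_assoc, ← map_eval_mul, ← map_eval_mul, ← hC, ← hC'])
  exact ⟨U, hU, fun w => by rw [hC, map_eval_mul, hCU]⟩
end

section
/- Let q ∈ ℂ[z,w] have degree at most (n,m) and no zeros on 𝔻², and let μ be the Bernstein–Szegő measure dμ = |q(z,w)|^{-2} dσ on 𝕋², where dσ is normalized Lebesgue measure. Then q ∈ L²(μ) and for every polynomial f ∈ ℂ[z,w] ∩ L²(μ) with f(0,0) = 0 whose Fourier support lies in {(j,k): k ≥ 1} ∪ {(j,0): j ≥ 1}, one has ∫_{𝕋²} f/q dσ = 0, i.e. f ⟂ q in L²(μ). -/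
/-!
For `z` on the unit circle, `w ↦ q(z, w)` has no zeros in the open disc unless it vanishes
identically (which happens for finitely many `z` only, as then `q(z, 0) = 0`): on a small circle
around a would-be zero it is the uniform limit of the zero-free `q(z', ·)`, `z' → z` from inside
the disc, and the minimum modulus principle for these forbids a zero at the centre (Hurwitz).

If `a / b` is integrable on a circle and the polynomial `b` has no zeros inside, then every zero
of `b` on the circle is a zero of `a`, since otherwise `|a / b| ≳ 1 / |θ - θ₀|`. Cancelling these
zeros reduces the circle average of `a / b` to the mean value property: it equals `a(c) / b(c)`.

As `f / q ∈ L²(σ) ⊆ L¹(σ)`, Fubini and two applications of the one-variable statement (to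
`q(z, ·)` and then to `q(·, 0)`) give `∫ f / q dσ = f(0, 0) / q(0, 0) = 0`.
-/

open MeasureTheory Real MvPolynomial
open Filter Topology Set Metric Asymptotics
open scoped Polynomial

section Circle

variable {c : ℂ} {R : ℝ}

theorem exists_mem_Icc_circleMap_eq {α : ℂ} (hα : α ∈ sphere c |R|) :
    ∃ θ ∈ Icc 0 (2 * π), circleMap c R θ = α := by
  rw [← image_circleMap_Ioc] at hα
  obtain ⟨θ, hθ, rfl⟩ := hα
  exact ⟨θ, Ioc_subset_Icc_self hθ, rfl⟩

theorem Polynomial.not_circleIntegrable_div_of_eval_eq_zero {a b : ℂ[X]} (hR : R ≠ 0)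
    {α : ℂ} (hα : α ∈ sphere c |R|) (hb : b ≠ 0) (hbα : b.eval α = 0) (haα : a.eval α ≠ 0) :
    ¬ CircleIntegrable (fun w ↦ a.eval w / b.eval w) c R := by
  obtain ⟨θ₀, hθ₀, rfl⟩ := exists_mem_Icc_circleMap_eq hα
  have hb_ne : ∀ᶠ θ in 𝓝[≠] θ₀, b.eval (circleMap c R θ) ≠ 0 := by
    have hS : {w | b.eval w ≠ 0} ∈ codiscreteWithin (sphere c |R|) :=
      codiscreteWithin_mono (subset_univ _)
        (Polynomial.finite_setOfPred_isRoot hb).compl_mem_codiscrete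
    have := mem_codiscrete.1 (circleMap_preimage_codiscrete hR hS) θ₀
    rwa [disjoint_principal_right, compl_compl] at this
  have hb_O : (fun θ ↦ b.eval (circleMap c R θ)) =O[𝓝[≠] θ₀] (fun θ ↦ θ - θ₀) := by
    have := ((b.hasDerivAt _).comp θ₀ (hasDerivAt_circleMap c R θ₀)).isBigO_sub
    simpa [hbα] using this.mono nhdsWithin_le_nhds
  have ha_O : (fun _ ↦ (1 : ℝ)) =O[𝓝[≠] θ₀] (fun θ ↦ a.eval (circleMap c R θ)) := by
    refine (isBigO_const_left_iff_pos_le_norm one_ne_zero).2 ⟨‖a.eval (circleMap c R θ₀)‖ / 2,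
      by positivity, ?_⟩
    have hcont : Continuous (fun θ ↦ ‖a.eval (circleMap c R θ)‖) := by fun_prop
    exact ((hcont.tendsto θ₀).eventually_const_le (by simpa using haα)).filter_mono
      nhdsWithin_le_nhds
  have key : (fun θ ↦ (θ - θ₀)⁻¹) =O[𝓝[≠] θ₀]
      (fun θ ↦ a.eval (circleMap c R θ) / b.eval (circleMap c R θ)) := by
    simpa [div_eq_mul_inv] using ha_O.mul (hb_O.inv_rev (hb_ne.mono fun θ h h0 ↦ absurd h0 h))
  exact not_intervalIntegrable_of_sub_inv_isBigO_punctured key two_pi_pos.ne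
    (by rwa [uIcc_of_le two_pi_pos.le])

theorem Polynomial.circleAverage_div_of_forall_mem_closedBall {a b : ℂ[X]}
    (hb : ∀ w ∈ closedBall c |R|, b.eval w ≠ 0) :
    circleAverage (fun w ↦ a.eval w / b.eval w) c R = a.eval c / b.eval c := by
  rcases eq_or_ne R 0 with rfl | hR
  · simp
  refine DiffContOnCl.circleAverage (DifferentiableOn.diffContOnCl ?_)
  rw [closure_ball c (abs_ne_zero.2 hR)]
  exact fun w hw ↦ (a.differentiableAt.div b.differentiableAt (hb w hw)).differentiableWithinAt

theorem Polynomial.eval_mul_X_sub_C_div {a b : ℂ[X]} {α w : ℂ} (hw : w ≠ α) :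
    ((Polynomial.X - Polynomial.C α) * a).eval w / ((Polynomial.X - Polynomial.C α) * b).eval w =
      a.eval w / b.eval w := by
  simp only [Polynomial.eval_mul, Polynomial.eval_sub, Polynomial.eval_X, Polynomial.eval_C]
  exact mul_div_mul_left _ _ (sub_ne_zero.2 hw)

theorem Polynomial.circleAverage_div_of_circleIntegrable {a b : ℂ[X]}
    (hb : ∀ w ∈ ball c |R|, b.eval w ≠ 0)
    (hab : CircleIntegrable (fun w ↦ a.eval w / b.eval w) c R) :
    circleAverage (fun w ↦ a.eval w / b.eval w) c R = a.eval c / b.eval c := by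
  rcases eq_or_ne R 0 with rfl | hR
  · simp
  induction hn : b.natDegree using Nat.strong_induction_on generalizing a b with
  | _ n ih =>
  by_cases hroot : ∃ α ∈ sphere c |R|, b.eval α = 0
  swap
  · push Not at hroot
    refine Polynomial.circleAverage_div_of_forall_mem_closedBall fun w hw ↦ ?_
    rcases (mem_closedBall.1 hw).lt_or_eq with h | h
    exacts [hb w (mem_ball.2 h), hroot w (mem_sphere.2 h)]
  obtain ⟨α, hα, hbα⟩ := hroot
  have hb0 : b ≠ 0 := fun h ↦ hb c (mem_ball_self (abs_pos.2 hR)) (by simp [h])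
  have haα : a.eval α = 0 := by
    by_contra haα
    exact Polynomial.not_circleIntegrable_div_of_eval_eq_zero hR hα hb0 hbα haα hab
  obtain ⟨a₁, rfl⟩ := Polynomial.dvd_iff_isRoot.2 haα
  obtain ⟨b₁, rfl⟩ := Polynomial.dvd_iff_isRoot.2 hbα
  have hcancel : (fun w ↦ ((Polynomial.X - Polynomial.C α) * a₁).eval w /
      ((Polynomial.X - Polynomial.C α) * b₁).eval w) =ᶠ[codiscreteWithin (sphere c |R|)]
      (fun w ↦ a₁.eval w / b₁.eval w) :=
    eventually_of_mem (codiscreteWithin_mono (subset_univ _)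
      (finite_singleton α).compl_mem_codiscrete) fun w hw ↦ Polynomial.eval_mul_X_sub_C_div hw
  have hb₁ : b₁ ≠ 0 := right_ne_zero_of_mul hb0
  have hdeg : b₁.natDegree < n := by
    rw [← hn, Polynomial.natDegree_mul (Polynomial.X_sub_C_ne_zero α) hb₁,
      Polynomial.natDegree_X_sub_C]
    omega
  have hcα : c ≠ α := (ne_of_mem_sphere hα (abs_ne_zero.2 hR)).symm
  rw [circleAverage_congr_codiscreteWithin hcancel hR, Polynomial.eval_mul_X_sub_C_div hcα]
  exact ih _ hdeg (fun w hw h ↦ hb w hw (by simp [h])) (hab.congr_codiscreteWithin hcancel) rfl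

theorem Polynomial.setIntegral_Icc_div_circleMap {a b : ℂ[X]}
    (hb : ∀ w ∈ ball c |R|, b.eval w ≠ 0)
    (hab : IntegrableOn (fun θ ↦ a.eval (circleMap c R θ) / b.eval (circleMap c R θ))
      (Icc 0 (2 * π))) :
    ∫ θ in Icc 0 (2 * π), a.eval (circleMap c R θ) / b.eval (circleMap c R θ) =
      (2 * π) • (a.eval c / b.eval c) := by
  have hab' : CircleIntegrable (fun w ↦ a.eval w / b.eval w) c R :=
    (intervalIntegrable_iff_integrableOn_Icc_of_le two_pi_pos.le).2 hab
  rw [← Polynomial.circleAverage_div_of_circleIntegrable hb hab', circleAverage_def,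
    smul_inv_smul₀ two_pi_pos.ne', intervalIntegral.integral_of_le two_pi_pos.le,
    integral_Icc_eq_integral_Ioc]

end Circle

theorem Complex.le_norm_of_forall_mem_frontier_le_norm {U : Set ℂ} {f : ℂ → ℂ} {δ : ℝ} {z : ℂ}
    (hU : Bornology.IsBounded U) (hf : DiffContOnCl ℂ f U) (hf0 : ∀ w ∈ closure U, f w ≠ 0)
    (hδ : 0 < δ) (hfr : ∀ w ∈ frontier U, δ ≤ ‖f w‖) (hz : z ∈ closure U) : δ ≤ ‖f z‖ := by
  have hinv : ‖(f z)⁻¹‖ ≤ δ⁻¹ :=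
    Complex.norm_le_of_forall_mem_frontier_norm_le hU (hf.inv hf0) (fun w hw ↦ by
      simpa [norm_inv] using inv_anti₀ hδ (hfr w hw)) hz
  rwa [norm_inv, inv_le_inv₀ (norm_pos_iff.2 (hf0 z hz)) hδ] at hinv

theorem Complex.ne_zero_of_mem_closure_of_forall_ne_zero {X : Type*} [TopologicalSpace X]
    {F : X → ℂ → ℂ} (hF : Continuous ↿F) {s : Set X} {x₀ : X} (hx₀ : x₀ ∈ closure s)
    {c : ℂ} {ρ : ℝ} (hρ : 0 < ρ)
    (hs : ∀ x ∈ s, DiffContOnCl ℂ (F x) (ball c ρ) ∧ ∀ w ∈ closedBall c ρ, F x w ≠ 0)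
    (hsphere : ∀ w ∈ sphere c ρ, F x₀ w ≠ 0) : F x₀ c ≠ 0 := by
  obtain ⟨w₁, hw₁, hmin⟩ := (isCompact_sphere c ρ).exists_isMinOn
    (NormedSpace.sphere_nonempty.2 hρ.le)
    (hF.comp (Continuous.prodMk_right x₀)).norm.continuousOn
  have hδ : 0 < ‖F x₀ w₁‖ := norm_pos_iff.2 (hsphere w₁ hw₁)
  have hnear : ∀ᶠ x in 𝓝 x₀, ∀ w ∈ sphere c ρ, ‖F x₀ w₁‖ / 2 ≤ ‖F x w‖ := by
    refine (isCompact_sphere c ρ).eventually_forall_of_forall_eventually fun w hw ↦ ?_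
    exact (hF.norm.tendsto (x₀, w)).eventually_const_le
      ((half_lt_self hδ).trans_le (hmin hw))
  have hmod : ∀ᶠ x in 𝓝[s] x₀, ‖F x₀ w₁‖ / 2 ≤ ‖F x c‖ := by
    filter_upwards [nhdsWithin_le_nhds hnear, self_mem_nhdsWithin] with x hx hxs
    refine Complex.le_norm_of_forall_mem_frontier_le_norm isBounded_ball (hs x hxs).1
      (by simpa [closure_ball c hρ.ne'] using (hs x hxs).2) (half_pos hδ)
      (by simpa [frontier_ball c hρ.ne'] using hx) (subset_closure (mem_ball_self hρ))
  have := mem_closure_iff_nhdsWithin_neBot.1 hx₀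
  have hlim : Tendsto (fun x ↦ ‖F x c‖) (𝓝[s] x₀) (𝓝 ‖F x₀ c‖) :=
    ((hF.comp (Continuous.prodMk_left c)).norm.tendsto x₀).mono_left nhdsWithin_le_nhds
  exact norm_pos_iff.1 ((half_pos hδ).trans_le (ge_of_tendsto hlim hmod))

namespace MvPolynomial

theorem polynomial_eval_aeval {R σ : Type*} [CommSemiring R] (v : σ → R[X])
    (p : MvPolynomial σ R) (x : R) :
    (aeval v p).eval x = eval (fun i ↦ (v i).eval x) p := by
  rw [← Polynomial.coe_aeval_eq_eval, ← AlgHom.comp_apply, comp_aeval]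
  rfl

variable (q : MvPolynomial (Fin 2) ℂ)

theorem eval_aeval_C_X (z w : ℂ) :
    (aeval ![Polynomial.C z, Polynomial.X] q).eval w = eval ![z, w] q := by
  rw [polynomial_eval_aeval]; congr; ext i; fin_cases i <;> simp

theorem eval_aeval_X_zero (z : ℂ) : (aeval ![Polynomial.X, 0] q).eval z = eval ![z, 0] q := by
  rw [polynomial_eval_aeval]; congr; ext i; fin_cases i <;> simp

variable {q}

theorem eval_ne_zero_of_norm_le_one (hq : ∀ z w : ℂ, ‖z‖ < 1 → ‖w‖ < 1 → eval ![z, w] q ≠ 0)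
    {z₀ w₀ : ℂ} (hz₀ : ‖z₀‖ ≤ 1) (hslice : aeval ![Polynomial.C z₀, Polynomial.X] q ≠ 0)
    (hw₀ : ‖w₀‖ < 1) : eval ![z₀, w₀] q ≠ 0 := by
  -- a radius `ρ < 1 - ‖w₀‖` at which the circle around `w₀` misses every zero of `q(z₀, ·)`
  obtain ⟨ρ, ⟨hρ0, hρ1⟩, hρroot⟩ := ((Ioo_infinite (sub_pos.2 hw₀)).sdiff
    ((Polynomial.finite_setOfPred_isRoot hslice).image (‖· - w₀‖))).nonempty
  have hball : closedBall w₀ ρ ⊆ ball 0 1 :=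
    closedBall_subset_ball' (by rw [dist_zero_right]; linarith)
  refine Complex.ne_zero_of_mem_closure_of_forall_ne_zero (F := fun z w ↦ eval ![z, w] q)
    ((continuous_eval q).comp (by fun_prop)) (s := ball 0 1)
    (by rwa [closure_ball _ one_ne_zero, mem_closedBall_zero_iff]) hρ0
    (fun z hz ↦ ⟨?_, fun w hw ↦
      hq z w (mem_ball_zero_iff.1 hz) (mem_ball_zero_iff.1 (hball hw))⟩)
    (fun w hw h ↦ hρroot ⟨w, by simpa [eval_aeval_C_X] using h, by simpa using hw⟩)
  simpa only [eval_aeval_C_X] using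
    (aeval ![Polynomial.C z, Polynomial.X] q).differentiable.diffContOnCl

theorem ae_aeval_C_circleMap_X_ne_zero {c : ℂ} {R : ℝ} (hR : R ≠ 0)
    (hq : aeval ![(Polynomial.X : ℂ[X]), 0] q ≠ 0) :
    ∀ᵐ θ, aeval ![Polynomial.C (circleMap c R θ), Polynomial.X] q ≠ 0 := by
  refine measure_mono_null (fun θ hθ ↦ ?_)
    (((Polynomial.finite_setOfPred_isRoot hq).countable.preimage_circleMap c hR).measure_zero _)
  have hθ : aeval ![Polynomial.C (circleMap c R θ), Polynomial.X] q = 0 := by simpa using hθ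
  show Polynomial.IsRoot _ _
  rw [Polynomial.IsRoot, eval_aeval_X_zero, ← eval_aeval_C_X, hθ, Polynomial.eval_zero]

end MvPolynomial

noncomputable def torusMapProd (p : ℝ × ℝ) : Fin 2 → ℂ :=
  ![circleMap 0 1 p.1, circleMap 0 1 p.2]

theorem continuous_eval_torusMapProd (g : MvPolynomial (Fin 2) ℂ) :
    Continuous fun p ↦ eval (torusMapProd p) g :=
  (continuous_eval g).comp (by unfold torusMapProd; fun_prop)

section Torus

variable {f q : MvPolynomial (Fin 2) ℂ}

theorem setIntegral_Icc_eval_div_circleMap_snd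
    (hq : ∀ z w : ℂ, ‖z‖ < 1 → ‖w‖ < 1 → eval ![z, w] q ≠ 0) {z : ℂ} (hz : ‖z‖ ≤ 1)
    (hslice : aeval ![Polynomial.C z, Polynomial.X] q ≠ 0)
    (hint : IntegrableOn (fun θ ↦ eval ![z, circleMap 0 1 θ] f / eval ![z, circleMap 0 1 θ] q)
      (Icc 0 (2 * π))) :
    ∫ θ in Icc 0 (2 * π), eval ![z, circleMap 0 1 θ] f / eval ![z, circleMap 0 1 θ] q =
      (2 * π) • (eval ![z, 0] f / eval ![z, 0] q) := by
  simp only [← eval_aeval_C_X] at hint ⊢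
  refine Polynomial.setIntegral_Icc_div_circleMap (fun w hw ↦ ?_) hint
  rw [eval_aeval_C_X]
  exact eval_ne_zero_of_norm_le_one hq hz hslice (by simpa using hw)

theorem setIntegral_torusMapProd_div
    (hq : ∀ z w : ℂ, ‖z‖ < 1 → ‖w‖ < 1 → eval ![z, w] q ≠ 0)
    (hf : IntegrableOn (fun p ↦ ‖eval (torusMapProd p) f‖ ^ 2 / ‖eval (torusMapProd p) q‖ ^ 2)
      (Icc 0 (2 * π) ×ˢ Icc 0 (2 * π))) :
    ∫ p in Icc 0 (2 * π) ×ˢ Icc 0 (2 * π), eval (torusMapProd p) f / eval (torusMapProd p) q =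
      (2 * π) • (2 * π) • (eval ![0, 0] f / eval ![0, 0] q) := by
  set I := Icc 0 (2 * π)
  have : IsFiniteMeasure (volume.restrict (I ×ˢ I)) :=
    isFiniteMeasure_restrict.2 (isCompact_Icc.prod isCompact_Icc).measure_lt_top.ne
  have hint : IntegrableOn (fun p ↦ eval (torusMapProd p) f / eval (torusMapProd p) q)
      (I ×ˢ I) := by
    have hmeas : AEStronglyMeasurable (fun p ↦ eval (torusMapProd p) f / eval (torusMapProd p) q)
        (volume.restrict (I ×ˢ I)) :=
      ((continuous_eval_torusMapProd f).measurable.div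
        (continuous_eval_torusMapProd q).measurable).aestronglyMeasurable
    exact ((memLp_two_iff_integrable_sq_norm hmeas).2
      (by simpa only [norm_div, div_pow] using hf.integrable)).integrable one_le_two
  rw [Measure.volume_eq_prod] at hint ⊢
  have hprod := hint.integrable
  rw [← Measure.prod_restrict] at hprod
  have hq₀ : aeval ![Polynomial.X, 0] q ≠ 0 := fun h ↦
    hq 0 0 (by simp) (by simp) (by rw [← eval_aeval_X_zero, h, Polynomial.eval_zero])
  have hinner : ∀ᵐ s ∂volume.restrict I,
      ∫ t in I, eval (torusMapProd (s, t)) f / eval (torusMapProd (s, t)) q =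
        (2 * π) • (eval ![circleMap 0 1 s, 0] f / eval ![circleMap 0 1 s, 0] q) := by
    filter_upwards [hprod.prod_right_ae,
      ae_restrict_of_ae (ae_aeval_C_circleMap_X_ne_zero one_ne_zero hq₀)] with s hs hslice
    simp only [torusMapProd] at hs ⊢
    exact setIntegral_Icc_eval_div_circleMap_snd hq (by simp) hslice hs
  have houter := (integrable_smul_iff two_pi_pos.ne' _).1 (hprod.integral_prod_left.congr hinner)
  rw [setIntegral_prod _ hint, integral_congr_ae hinner, integral_smul]
  simp only [← eval_aeval_X_zero] at houter ⊢
  rw [Polynomial.setIntegral_Icc_div_circleMap (fun w hw ↦ ?_) houter]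
  rw [eval_aeval_X_zero]
  exact hq w 0 (by simpa using hw) (by simp)

end Torus

theorem bernstein_szego_orthogonality_general
    (q : MvPolynomial (Fin 2) ℂ)
    (hq : ∀ z w : ℂ, ‖z‖ < 1 → ‖w‖ < 1 →
      MvPolynomial.eval (![z, w]) q ≠ 0)
    -- the torus parametrized by angles, with normalized Lebesgue measure
    (T : ℝ × ℝ → Fin 2 → ℂ)
    (hT : ∀ p : ℝ × ℝ, T p = ![Complex.exp (p.1 * Complex.I), Complex.exp (p.2 * Complex.I)]) :
    -- q belongs to L²(μ) where dμ = |q|⁻² dσ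
    IntegrableOn
      (fun p : ℝ × ℝ => ‖MvPolynomial.eval (T p) q‖ ^ 2 /
        ‖MvPolynomial.eval (T p) q‖ ^ 2)
      (Set.Icc 0 (2 * π) ×ˢ Set.Icc 0 (2 * π)) volume ∧
    -- orthogonality: for f ∈ ℂ[z,w] ∩ L²(μ) with Fourier support in
    -- {(j,k) : k ≥ 1} ∪ {(j,0) : j ≥ 1} (in particular f(0,0) = 0), ∫ f/q dσ = 0
    ∀ f : MvPolynomial (Fin 2) ℂ,
      IntegrableOn
        (fun p : ℝ × ℝ => ‖MvPolynomial.eval (T p) f‖ ^ 2 /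
          ‖MvPolynomial.eval (T p) q‖ ^ 2)
        (Set.Icc 0 (2 * π) ×ˢ Set.Icc 0 (2 * π)) volume →
      MvPolynomial.eval (fun _ => (0 : ℂ)) f = 0 →
      (∀ d ∈ f.support, 1 ≤ d 1 ∨ (d 1 = 0 ∧ 1 ≤ d 0)) →
      ∫ p in (Set.Icc 0 (2 * π) ×ˢ Set.Icc 0 (2 * π)),
          MvPolynomial.eval (T p) f / MvPolynomial.eval (T p) q ∂volume = 0 := by
  obtain rfl : T = torusMapProd := funext fun p ↦ by simp [hT, torusMapProd, circleMap_zero]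
  refine ⟨?_, fun f hf hf0 _ ↦ ?_⟩
  · refine Measure.integrableOn_of_bounded (M := 1)
      (isCompact_Icc.prod isCompact_Icc).measure_lt_top.ne
      (((continuous_eval_torusMapProd q).norm.pow 2).measurable.div
        ((continuous_eval_torusMapProd q).norm.pow 2).measurable).aestronglyMeasurable
      (Eventually.of_forall fun p ↦ ?_)
    rw [Real.norm_of_nonneg (by positivity)]
    exact div_self_le_one _
  · have h00 : ![(0 : ℂ), 0] = fun _ ↦ 0 := by ext i; fin_cases i <;> rfl
    rw [setIntegral_torusMapProd_div hq hf, h00, hf0, zero_div, smul_zero, smul_zero]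

theorem bernstein_szego_orthogonality
    (n m : ℕ) (q : MvPolynomial (Fin 2) ℂ)
    (hdeg : q.degreeOf 0 ≤ n ∧ q.degreeOf 1 ≤ m)
    (hq : ∀ z w : ℂ, ‖z‖ < 1 → ‖w‖ < 1 →
      MvPolynomial.eval (![z, w]) q ≠ 0)
    -- the torus parametrized by angles, with normalized Lebesgue measure
    (T : ℝ × ℝ → Fin 2 → ℂ)
    (hT : ∀ p : ℝ × ℝ, T p = ![Complex.exp (p.1 * Complex.I), Complex.exp (p.2 * Complex.I)]) :
    -- q belongs to L²(μ) where dμ = |q|⁻² dσ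
    IntegrableOn
      (fun p : ℝ × ℝ => ‖MvPolynomial.eval (T p) q‖ ^ 2 /
        ‖MvPolynomial.eval (T p) q‖ ^ 2)
      (Set.Icc 0 (2 * π) ×ˢ Set.Icc 0 (2 * π)) volume ∧
    -- orthogonality: for f ∈ ℂ[z,w] ∩ L²(μ) with Fourier support in
    -- {(j,k) : k ≥ 1} ∪ {(j,0) : j ≥ 1} (in particular f(0,0) = 0), ∫ f/q dσ = 0
    ∀ f : MvPolynomial (Fin 2) ℂ,
      IntegrableOn
        (fun p : ℝ × ℝ => ‖MvPolynomial.eval (T p) f‖ ^ 2 /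
          ‖MvPolynomial.eval (T p) q‖ ^ 2)
        (Set.Icc 0 (2 * π) ×ˢ Set.Icc 0 (2 * π)) volume →
      MvPolynomial.eval (fun _ => (0 : ℂ)) f = 0 →
      (∀ d ∈ f.support, 1 ≤ d 1 ∨ (d 1 = 0 ∧ 1 ≤ d 0)) →
      ∫ p in (Set.Icc 0 (2 * π) ×ˢ Set.Icc 0 (2 * π)),
          MvPolynomial.eval (T p) f / MvPolynomial.eval (T p) q ∂volume = 0 :=
  bernstein_szego_orthogonality_general q hq T hT
end

section
/- Let q ∈ ℂ[z,w] have no zeros on 𝕋² at points with first coordinate z₀ (z₀ ∈ 𝕋 fixed), and let μ be the measure |q|^{-2}dσ on 𝕋². If f ∈ ℂ[z,w] and (z−z₀)f ∈ L²(μ), then f ∈ L²(μ). -/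
open MeasureTheory Real MvPolynomial

/-!
Near the slice z = z₀ of the torus, q is bounded away from zero, so there |f|²/|q|² is bounded;
away from that slice |z - z₀| is bounded below, so |f|²/|q|² is dominated by a multiple of
|(z - z₀) f|²/|q|². By compactness a single threshold separates the two regimes.
-/

theorem IsCompact.exists_pos_le_norm_or_le_norm {X E F : Type*} [TopologicalSpace X]
    [NormedAddCommGroup E] [NormedAddCommGroup F] {K : Set X} (hK : IsCompact K)
    {g : X → E} {h : X → F} (hg : Continuous g) (hh : Continuous h)
    (hgh : ∀ x ∈ K, g x = 0 → h x ≠ 0) :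
    ∃ c > 0, ∀ x ∈ K, c ≤ ‖g x‖ ∨ c ≤ ‖h x‖ := by
  have hpos : ∀ x ∈ K, 0 < ‖g x‖ + ‖h x‖ := by
    intro x hx
    by_cases hgx : g x = 0
    · simpa [hgx] using hgh x hx hgx
    · exact add_pos_of_pos_of_nonneg (norm_pos_iff.mpr hgx) (norm_nonneg _)
  obtain ⟨m, hm, hmle⟩ :=
    hK.exists_forall_le' (f := fun x => ‖g x‖ + ‖h x‖) (hg.norm.add hh.norm).continuousOn hpos
  refine ⟨m / 2, half_pos hm, fun x hx => ?_⟩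
  by_contra! hlt
  linarith [hmle x hx, hlt.1, hlt.2]

theorem norm_sq_div_norm_sq_le {𝕜 : Type*} [NormedDivisionRing 𝕜] {u v w : 𝕜} {B c : ℝ}
    (hc : 0 < c) (hvw : c ≤ ‖v‖ ∨ c ≤ ‖w‖) (hu : ‖u‖ ^ 2 ≤ B) :
    ‖u‖ ^ 2 / ‖v‖ ^ 2 ≤ B / c ^ 2 + ‖w * u‖ ^ 2 / ‖v‖ ^ 2 / c ^ 2 := by
  rcases hvw with hv | hw
  · have hB : ‖u‖ ^ 2 / ‖v‖ ^ 2 ≤ B / c ^ 2 :=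
      div_le_div₀ ((sq_nonneg _).trans hu) hu (by positivity) (pow_le_pow_left₀ hc.le hv 2)
    linarith [show 0 ≤ ‖w * u‖ ^ 2 / ‖v‖ ^ 2 / c ^ 2 by positivity]
  · have hw2 : c ^ 2 ≤ ‖w‖ ^ 2 := pow_le_pow_left₀ hc.le hw 2
    have hwu : ‖u‖ ^ 2 / ‖v‖ ^ 2 ≤ ‖w * u‖ ^ 2 / ‖v‖ ^ 2 / c ^ 2 := by
      rw [norm_mul, mul_pow, mul_div_assoc, le_div_iff₀ (by positivity), mul_comm]
      exact mul_le_mul_of_nonneg_right hw2 (by positivity)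
    linarith [show 0 ≤ B / c ^ 2 from div_nonneg ((sq_nonneg _).trans hu) (sq_nonneg c)]

theorem IsCompact.integrableOn_norm_sq_div_of_mul {X 𝕜 : Type*} [TopologicalSpace X] [T2Space X]
    [MeasurableSpace X] [OpensMeasurableSpace X] [NormedDivisionRing 𝕜]
    {μ : Measure X} [IsFiniteMeasureOnCompacts μ] {K : Set X} (hK : IsCompact K)
    {u v w : X → 𝕜} (hu : Continuous u) (hv : Continuous v) (hw : Continuous w)
    (hvw : ∀ x ∈ K, v x = 0 → w x ≠ 0)
    (hint : IntegrableOn (fun x => ‖w x * u x‖ ^ 2 / ‖v x‖ ^ 2) K μ) :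
    IntegrableOn (fun x => ‖u x‖ ^ 2 / ‖v x‖ ^ 2) K μ := by
  obtain ⟨c, hc, hcK⟩ := hK.exists_pos_le_norm_or_le_norm hv hw hvw
  obtain ⟨B, hB⟩ := hK.exists_bound_of_continuousOn (hu.norm.pow 2).continuousOn
  have hbound : IntegrableOn (fun x => B / c ^ 2 + ‖w x * u x‖ ^ 2 / ‖v x‖ ^ 2 / c ^ 2) K μ :=
    (integrableOn_const hK.measure_ne_top).add (hint.div_const _)
  refine hbound.mono'
    ((hu.norm.pow 2).measurable.div (hv.norm.pow 2).measurable).aestronglyMeasurable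
    ((ae_restrict_iff' hK.measurableSet).mpr (ae_of_all _ fun x hx => ?_))
  rw [Real.norm_of_nonneg (by positivity)]
  exact norm_sq_div_norm_sq_le hc (hcK x hx) ((Real.le_norm_self _).trans (hB x hx))

theorem linear_factor_is_divisor_of_bernstein_szego_ideal_general
    (q f : MvPolynomial (Fin 2) ℂ) (z₀ : ℂ)
    -- q has no zeros on 𝕋² at points with first coordinate z₀
    (hq : ∀ w : ℂ, ‖w‖ = 1 → MvPolynomial.eval (![z₀, w]) q ≠ 0)
    (T : ℝ × ℝ → Fin 2 → ℂ)
    (hT : ∀ p : ℝ × ℝ, T p = ![Complex.exp (p.1 * Complex.I), Complex.exp (p.2 * Complex.I)])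
    -- (z - z₀)·f belongs to L²(|q|⁻² dσ)
    (hmem : IntegrableOn
      (fun p : ℝ × ℝ =>
        ‖MvPolynomial.eval (T p)
          ((MvPolynomial.X 0 - MvPolynomial.C z₀) * f)‖ ^ 2 /
          ‖MvPolynomial.eval (T p) q‖ ^ 2)
      (Set.Icc 0 (2 * π) ×ˢ Set.Icc 0 (2 * π)) volume) :
    -- then f itself belongs to L²(|q|⁻² dσ)
    IntegrableOn
      (fun p : ℝ × ℝ => ‖MvPolynomial.eval (T p) f‖ ^ 2 /
        ‖MvPolynomial.eval (T p) q‖ ^ 2)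
      (Set.Icc 0 (2 * π) ×ˢ Set.Icc 0 (2 * π)) volume := by
  have hTc : Continuous T := by
    rw [funext hT]
    exact continuous_pi fun i => by fin_cases i <;> simp <;> fun_prop
  have hzeros : ∀ p, MvPolynomial.eval (T p) q = 0 → T p 0 - z₀ ≠ 0 := by
    intro p hqp hzp
    have hTp : T p = ![z₀, T p 1] := by
      funext i; fin_cases i <;> simp [sub_eq_zero.mp hzp]
    exact hq (T p 1) (by simp [hT, Complex.norm_exp]) (hTp ▸ hqp)
  refine (isCompact_Icc.prod isCompact_Icc).integrableOn_norm_sq_div_of_mul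
    (w := fun p => T p 0 - z₀) ((continuous_eval f).comp hTc) ((continuous_eval q).comp hTc)
    (by fun_prop) (fun p _ => hzeros p) ?_
  simpa only [map_mul, map_sub, eval_X, eval_C] using hmem

theorem linear_factor_is_divisor_of_bernstein_szego_ideal
    (q f : MvPolynomial (Fin 2) ℂ) (z₀ : ℂ) (hz₀ : ‖z₀‖ = 1)
    -- q has no zeros on 𝕋² at points with first coordinate z₀
    (hq : ∀ w : ℂ, ‖w‖ = 1 → MvPolynomial.eval (![z₀, w]) q ≠ 0)
    (T : ℝ × ℝ → Fin 2 → ℂ)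
    (hT : ∀ p : ℝ × ℝ, T p = ![Complex.exp (p.1 * Complex.I), Complex.exp (p.2 * Complex.I)])
    -- (z - z₀)·f belongs to L²(|q|⁻² dσ)
    (hmem : IntegrableOn
      (fun p : ℝ × ℝ =>
        ‖MvPolynomial.eval (T p)
          ((MvPolynomial.X 0 - MvPolynomial.C z₀) * f)‖ ^ 2 /
          ‖MvPolynomial.eval (T p) q‖ ^ 2)
      (Set.Icc 0 (2 * π) ×ˢ Set.Icc 0 (2 * π)) volume) :
    -- then f itself belongs to L²(|q|⁻² dσ)
    IntegrableOn
      (fun p : ℝ × ℝ => ‖MvPolynomial.eval (T p) f‖ ^ 2 /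
        ‖MvPolynomial.eval (T p) q‖ ^ 2)
      (Set.Icc 0 (2 * π) ×ˢ Set.Icc 0 (2 * π)) volume :=
  linear_factor_is_divisor_of_bernstein_szego_ideal_general q f z₀ hq T hT hmem
end

section
/- Let U be a symmetric unitary n×n complex matrix (U = Uᵀ, U*U = I). Then there exists a unitary matrix V with U = VᵀV (Takagi factorization). -/
/-!
A symmetric unitary `U` has a square root `W = U ^ (1/2)` given by the continuous functional
calculus: any branch of the square root is continuous on the finite spectrum of `U`, and it maps
the unit circle to itself, so `W` is unitary. On a finite spectrum the functional calculus agrees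
with a Lagrange interpolation polynomial, so `W` is a polynomial in `U = Uᵀ` and hence symmetric.
Then `Wᵀ * W = W * W = U`.
-/

open Polynomial
open scoped Matrix

lemma Matrix.transpose_aeval {n R : Type*} [Fintype n] [DecidableEq n] [CommSemiring R]
    (A : Matrix n n R) (q : R[X]) : (aeval A q)ᵀ = aeval Aᵀ q := by
  induction q using Polynomial.induction_on' with
  | add p q hp hq => simp [hp, hq]
  | monomial k r =>
    rw [aeval_monomial, aeval_monomial, transpose_mul, transpose_pow, algebraMap_eq_diagonal,
      diagonal_transpose, ← algebraMap_eq_diagonal, Algebra.commutes]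

lemma exists_cfc_eq_aeval_of_finite_spectrum {R A : Type*} {p : A → Prop} [Field R] [StarRing R]
    [MetricSpace R] [IsTopologicalRing R] [ContinuousStar R] [TopologicalSpace A] [Ring A]
    [StarRing A] [Algebra R A] [ContinuousFunctionalCalculus R A p]
    (f : R → R) {a : A} (ha : (spectrum R a).Finite) : ∃ q : R[X], cfc f a = aeval a q := by
  classical
  by_cases hpa : p a
  · refine ⟨Lagrange.interpolate ha.toFinset id f, ?_⟩
    rw [← cfc_polynomial _ a]
    exact cfc_congr fun x hx =>
      (Lagrange.eval_interpolate_at_node f (Set.injOn_id _) (ha.mem_toFinset.mpr hx)).symm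
  · exact ⟨0, by simp [cfc_apply_of_not_predicate a hpa]⟩

section UnitarySqrt

variable {A : Type*} [TopologicalSpace A] [Ring A] [StarRing A] [Algebra ℂ A]
  [ContinuousFunctionalCalculus ℂ A IsStarNormal] {u : A}

lemma cfc_cpow_inv_two_mem_unitary (hu : u ∈ unitary A)
    (hcont : ContinuousOn (fun z : ℂ => z ^ (2⁻¹ : ℂ)) (spectrum ℂ u)) :
    cfc (fun z : ℂ => z ^ (2⁻¹ : ℂ)) u ∈ unitary A := by
  have := isStarNormal_of_mem_unitary hu
  rw [cfc_unitary_iff _ u]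
  intro z hz
  have hz1 : ‖z‖ = 1 :=
    CStarRing.norm_of_mem_unitary (spectrum_subset_unitary_of_mem_unitary hu hz)
  have hsqrt1 : ‖z ^ (2⁻¹ : ℂ)‖ = 1 := by
    rw [← pow_eq_one_iff_of_nonneg (norm_nonneg _) two_ne_zero, ← norm_pow,
      Complex.cpow_ofNat_inv_pow, hz1]
  rw [RCLike.star_def, RCLike.conj_mul, hsqrt1]
  simp

lemma cfc_cpow_inv_two_mul_self (hu : u ∈ unitary A)
    (hcont : ContinuousOn (fun z : ℂ => z ^ (2⁻¹ : ℂ)) (spectrum ℂ u)) :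
    cfc (fun z : ℂ => z ^ (2⁻¹ : ℂ)) u * cfc (fun z : ℂ => z ^ (2⁻¹ : ℂ)) u = u := by
  have := isStarNormal_of_mem_unitary hu
  rw [← cfc_mul _ _ u]
  conv_rhs => rw [← cfc_id' ℂ u]
  exact cfc_congr fun z _ => by rw [← sq, Complex.cpow_ofNat_inv_pow]

end UnitarySqrt

open scoped Matrix.Norms.L2Operator

lemma Matrix.IsSymm.cfc {n : Type*} [Fintype n] [DecidableEq n] {A : Matrix n n ℂ}
    (hA : A.IsSymm) (f : ℂ → ℂ) : (cfc f A).IsSymm := by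
  obtain ⟨q, hq⟩ := exists_cfc_eq_aeval_of_finite_spectrum f A.finite_spectrum
  rw [hq, Matrix.IsSymm, Matrix.transpose_aeval, hA.eq]

theorem takagi_factorization_of_symmetric_unitary {n : ℕ}
    (U : Matrix (Fin n) (Fin n) ℂ)
    (hU : U ∈ Matrix.unitaryGroup (Fin n) ℂ)
    (hsym : U.transpose = U) :
    ∃ V ∈ Matrix.unitaryGroup (Fin n) ℂ, U = V.transpose * V := by
  have hcont := U.finite_spectrum.continuousOn (fun z : ℂ => z ^ (2⁻¹ : ℂ))
  refine ⟨cfc (fun z : ℂ => z ^ (2⁻¹ : ℂ)) U, cfc_cpow_inv_two_mem_unitary hU hcont, ?_⟩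
  rw [(Matrix.IsSymm.cfc hsym _).eq, cfc_cpow_inv_two_mul_self hU hcont]
end

section
/- Let Φ(z) = (1/2)·[[z(1+z), z²(1−z)],[1−z, z(1+z)]]. Then Φ(z)Φ(z)* = I₂ for all z on the unit circle, and det(wI₂ − Φ(z)) = (w−z)(w−z²) for all complex z, w. -/
/-!
With `P = ½ [[1, 1], [1, 1]]` the orthogonal projection onto the constant vectors,
`Φ(z) = diag(z, 1) · (P + z (1 - P)) · diag(1, z)`, and for `|z| = 1` each factor is unitary:
`P + z (1 - P)` is unitary whenever `P` is a self-adjoint idempotent and `z` is unimodular.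
For the determinant, `tr Φ(z) = z + z²` and `det Φ(z) = z³`, so the characteristic polynomial of
`Φ(z)` is `(w - z)(w - z²)`.
-/

open Matrix

theorem IsStarProjection.add_smul_one_sub_mem_unitary {S A : Type*} [CommRing S] [StarRing S]
    [Ring A] [StarRing A] [Algebra S A] [StarModule S A] {p : A} (hp : IsStarProjection p)
    {u : S} (hu : u ∈ unitary S) : p + u • (1 - p) ∈ unitary A := by
  have hpq : p * (1 - p) = 0 := hp.isIdempotentElem.mul_one_sub_self
  have hqp : (1 - p) * p = 0 := hp.isIdempotentElem.one_sub_mul_self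
  rw [Unitary.mem_iff, star_add, star_smul, hp.isSelfAdjoint.star_eq,
    hp.one_sub.isSelfAdjoint.star_eq]
  simp only [add_mul, mul_add, mul_smul_comm, smul_mul_assoc, smul_smul, hpq, hqp,
    hp.isIdempotentElem.eq, hp.one_sub.isIdempotentElem.eq, Unitary.star_mul_self_of_mem hu,
    Unitary.mul_star_self_of_mem hu, smul_zero, one_smul, add_zero, zero_add, add_sub_cancel,
    and_self]

theorem Complex.mem_unitary_of_norm_eq_one {z : ℂ} (hz : ‖z‖ = 1) : z ∈ unitary ℂ :=
  Unitary.mem_iff.2 ⟨by simp [Complex.conj_mul', hz], by simp [Complex.mul_conj', hz]⟩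

theorem Matrix.diagonal_mem_unitary {n α : Type*} [Fintype n] [DecidableEq n] [Semiring α]
    [StarRing α] {d : n → α} (hd : ∀ i, d i ∈ unitary α) :
    diagonal d ∈ unitary (Matrix n n α) := by
  rw [Unitary.mem_iff, star_eq_conjTranspose, diagonal_conjTranspose, diagonal_mul_diagonal,
    diagonal_mul_diagonal, ← diagonal_one]
  exact ⟨congrArg diagonal (funext fun i => Unitary.star_mul_self_of_mem (hd i)),
    congrArg diagonal (funext fun i => Unitary.mul_star_self_of_mem (hd i))⟩

def Matrix.averaging (n 𝕜 : Type*) [Fintype n] [DivisionRing 𝕜] : Matrix n n 𝕜 :=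
  of fun _ _ => (Fintype.card n : 𝕜)⁻¹

theorem Matrix.isStarProjection_averaging (n 𝕜 : Type*) [Fintype n] [Field 𝕜] [CharZero 𝕜]
    [StarRing 𝕜] : IsStarProjection (averaging n 𝕜) := by
  refine isStarProjection_iff'.2 ⟨?_, ?_⟩
  · ext i j
    have : Nonempty n := ⟨i⟩
    have hcard : (Fintype.card n : 𝕜) ≠ 0 := Nat.cast_ne_zero.2 Fintype.card_ne_zero
    simp only [averaging, mul_apply, of_apply, Finset.sum_const, Finset.card_univ, nsmul_eq_mul]
    field_simp
  · ext i j
    simp [averaging]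

theorem Matrix.det_smul_one_sub_fin_two {R : Type*} [CommRing R]
    (A : Matrix (Fin 2) (Fin 2) R) (w : R) :
    (w • (1 : Matrix (Fin 2) (Fin 2) R) - A).det = w ^ 2 - A.trace * w + A.det := by
  simp only [det_fin_two, trace_fin_two, sub_apply, Matrix.smul_apply, one_apply_eq, one_apply_ne,
    smul_eq_mul, mul_one, mul_zero, ne_eq, zero_ne_one, one_ne_zero, not_false_eq_true]
  ring

theorem determinantal_matrix_eq_diagonal_mul_averaging_mul_diagonal (z : ℂ) :
    (1/2 : ℂ) • of ![![z * (1 + z), z ^ 2 * (1 - z)], ![1 - z, z * (1 + z)]] =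
      diagonal ![z, 1] * (averaging (Fin 2) ℂ + z • (1 - averaging (Fin 2) ℂ)) *
        diagonal ![1, z] := by
  ext i j
  fin_cases i <;> fin_cases j <;> simp [averaging, mul_apply, Fin.sum_univ_two, one_apply] <;> ring

theorem determinantal_representation_example
    (Φ : ℂ → Matrix (Fin 2) (Fin 2) ℂ)
    (hΦ : ∀ z : ℂ, Φ z = (1/2 : ℂ) •
      Matrix.of ![![z * (1 + z), z ^ 2 * (1 - z)], ![1 - z, z * (1 + z)]]) :
    (∀ z : ℂ, ‖z‖ = 1 → Φ z * (Φ z).conjTranspose = 1) ∧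
    (∀ z w : ℂ, (w • (1 : Matrix (Fin 2) (Fin 2) ℂ) - Φ z).det = (w - z) * (w - z ^ 2)) := by
  refine ⟨fun z hz => ?_, fun z w => ?_⟩
  · have hz : z ∈ unitary ℂ := Complex.mem_unitary_of_norm_eq_one hz
    have hone : (1 : ℂ) ∈ unitary ℂ := (unitary ℂ).one_mem
    have hΦz : Φ z ∈ unitary (Matrix (Fin 2) (Fin 2) ℂ) := by
      rw [hΦ, determinantal_matrix_eq_diagonal_mul_averaging_mul_diagonal]
      refine mul_mem (mul_mem ?_ ?_) ?_
      · exact diagonal_mem_unitary (Fin.forall_fin_two.2 ⟨hz, hone⟩)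
      · exact (isStarProjection_averaging _ _).add_smul_one_sub_mem_unitary hz
      · exact diagonal_mem_unitary (Fin.forall_fin_two.2 ⟨hone, hz⟩)
    exact Unitary.mul_star_self_of_mem hΦz
  · have htrace : (Φ z).trace = z + z ^ 2 := by
      rw [hΦ, trace_smul, trace_fin_two_of, smul_eq_mul]
      ring
    have hdet : (Φ z).det = z ^ 3 := by
      rw [hΦ, det_smul, det_fin_two_of, Fintype.card_fin]
      ring
    rw [det_smul_one_sub_fin_two, htrace, hdet]
    ring
end

section
/- With Φ(z) = (1/2)·[[z(1+z), z²(1−z)],[1−z, z(1+z)]] and Q(z,w) = (2w−z−z², 1−z)ᵀ, one has Φ(z)·Q(z,w) = w·Q(z,w) for all (z,w) ∈ ℂ² with (z−w)(z²−w) = 0. Moreover, the matrix Q(z) = [[−z−z², 2],[1−z, 0]] (so that Q(z,w) = Q(z)(1,w)ᵀ) is invertible for every z in the closed unit disk with z ≠ 1. -/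
/-! The eigen-equation `Φ(z) Q(z,w) = w Q(z,w)` holds identically in its second coordinate, and in
the first it fails by exactly `-2 (z - w)(z² - w)`, the defining polynomial of `V`. Invertibility
of `Q(z)` comes from `det Q(z) = 2 (z - 1)`. -/

open Matrix

noncomputable section

def phiMatrix (z : ℂ) : Matrix (Fin 2) (Fin 2) ℂ :=
  (1 / 2 : ℂ) • !![z * (1 + z), z ^ 2 * (1 - z); 1 - z, z * (1 + z)]

def qMatrix (z : ℂ) : Matrix (Fin 2) (Fin 2) ℂ :=
  !![-z - z ^ 2, 2; 1 - z, 0]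

def qVec (z w : ℂ) : Fin 2 → ℂ :=
  ![2 * w - z - z ^ 2, 1 - z]

end

lemma qMatrix_mulVec (z w : ℂ) : qMatrix z *ᵥ ![1, w] = qVec z w := by
  ext i
  fin_cases i <;> simp [qMatrix, qVec]
  ring

lemma phiMatrix_mulVec_qVec (z w : ℂ) :
    phiMatrix z *ᵥ qVec z w = w • qVec z w + ![-2 * ((z - w) * (z ^ 2 - w)), 0] := by
  ext i
  fin_cases i <;> simp [phiMatrix, qVec] <;> ring

lemma phiMatrix_mulVec_qVec_of_mem (z w : ℂ) (h : (z - w) * (z ^ 2 - w) = 0) :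
    phiMatrix z *ᵥ qVec z w = w • qVec z w := by
  rw [phiMatrix_mulVec_qVec, h, mul_zero, add_eq_left]
  ext i
  fin_cases i <;> rfl

lemma det_qMatrix (z : ℂ) : (qMatrix z).det = 2 * (z - 1) := by
  rw [qMatrix, det_fin_two_of]
  ring

lemma isUnit_qMatrix_iff (z : ℂ) : IsUnit (qMatrix z) ↔ z ≠ 1 := by
  rw [isUnit_iff_isUnit_det, det_qMatrix, isUnit_iff_ne_zero, mul_ne_zero_iff, sub_ne_zero]
  simp

theorem polynomial_eigenvector_example
    (Φ : ℂ → Matrix (Fin 2) (Fin 2) ℂ)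
    (hΦ : ∀ z : ℂ, Φ z = (1/2 : ℂ) •
      Matrix.of ![![z * (1 + z), z ^ 2 * (1 - z)], ![1 - z, z * (1 + z)]])
    (Q : ℂ → Matrix (Fin 2) (Fin 2) ℂ)
    (hQ : ∀ z : ℂ, Q z = Matrix.of ![![-z - z ^ 2, 2], ![1 - z, 0]]) :
    (∀ z w : ℂ, (Q z).mulVec ![1, w] = ![2 * w - z - z ^ 2, 1 - z]) ∧
    (∀ z w : ℂ, (z - w) * (z ^ 2 - w) = 0 →
      (Φ z).mulVec ![2 * w - z - z ^ 2, 1 - z] = w • ![2 * w - z - z ^ 2, 1 - z]) ∧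
    (∀ z : ℂ, ‖z‖ ≤ 1 → z ≠ 1 → IsUnit (Q z)) := by
  have hΦ' : Φ = phiMatrix := funext hΦ
  have hQ' : Q = qMatrix := funext hQ
  subst hΦ' hQ'
  exact ⟨qMatrix_mulVec, phiMatrix_mulVec_qVec_of_mem, fun z _ hz => (isUnit_qMatrix_iff z).2 hz⟩
end
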